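/- arXiv:1107.6010 — 7 statements merged into one kernel-verified Lean document; each statement's English description precedes it below -/
import Mathlib

section
/- Let A be a unital C*-algebra and let a ∈ A satisfy ‖a‖ ≤ 1 and ‖a a* − a* a‖ ≤ δ for some δ ≥ 0. Then for any two finitely supported families of complex coefficients p = (p_{kl}) and q = (q_{st}), one has ‖p(a,a*)·q(a,a*) − (pq)(a,a*)‖ ≤ C(p,q)·δ, where C(p,q) = Σ_{k,l,s,t} l·s·|p_{kl}|·|q_{st}|. -/
/-- Evaluation of a finitely supported coefficient family `p = (p_{kl})` at an element `a`
of a star `ℂ`-algebra: `p(a,a*) = ∑ p_{kl} a^k (a*)^l`. -/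
noncomputable def polyEvalA {A : Type*} [Ring A] [StarRing A] [Algebra ℂ A]
    (p : (ℕ × ℕ) →₀ ℂ) (a : A) : A :=
  p.sum fun kl c => c • (a ^ kl.1 * star a ^ kl.2)

/-- Convolution of coefficient families, corresponding to the product of the associated
polynomial functions `∑ p_{kl} z^k conj(z)^l`. -/
noncomputable def polyConv (p q : (ℕ × ℕ) →₀ ℂ) : (ℕ × ℕ) →₀ ℂ :=
  p.sum fun kl c => q.sum fun st d => Finsupp.single (kl.1 + st.1, kl.2 + st.2) (c * d)

private lemma aux_norm_pow_le_one {A : Type*} [CStarAlgebra A] {x : A} (hx : ‖x‖ ≤ 1) (n : ℕ) :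
    ‖x ^ n‖ ≤ 1 := by
  induction n with
  | zero =>
    rw [pow_zero]
    rcases subsingleton_or_nontrivial A with h | h
    · simp [Subsingleton.elim (1 : A) 0]
    · exact CStarRing.norm_one.le
  | succ n ih =>
    rw [pow_succ]
    calc ‖x ^ n * x‖ ≤ ‖x ^ n‖ * ‖x‖ := norm_mul_le _ _
    _ ≤ 1 * 1 := mul_le_mul ih hx (norm_nonneg _) zero_le_one
    _ = 1 := one_mul 1

private lemma aux_comm_one {A : Type*} [CStarAlgebra A] {x y : A} {δ : ℝ} (hδ : 0 ≤ δ)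
    (hy : ‖y‖ ≤ 1) (h : ‖x * y - y * x‖ ≤ δ) (s : ℕ) :
    ‖x * y ^ s - y ^ s * x‖ ≤ s * δ := by
  induction s with
  | zero => simp
  | succ s ih =>
    have key : x * y ^ (s + 1) - y ^ (s + 1) * x
        = (x * y - y * x) * y ^ s + y * (x * y ^ s - y ^ s * x) := by
      rw [pow_succ']; noncomm_ring
    rw [key]
    calc ‖(x * y - y * x) * y ^ s + y * (x * y ^ s - y ^ s * x)‖
        ≤ ‖x * y - y * x‖ * ‖y ^ s‖ + ‖y‖ * ‖x * y ^ s - y ^ s * x‖ :=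
          le_trans (norm_add_le _ _) (add_le_add (norm_mul_le _ _) (norm_mul_le _ _))
      _ ≤ δ * 1 + 1 * (s * δ) :=
          add_le_add (mul_le_mul h (aux_norm_pow_le_one hy s) (norm_nonneg _) hδ)
            (mul_le_mul hy ih (norm_nonneg _) zero_le_one)
      _ = (s + 1 : ℕ) * δ := by push_cast; ring

private lemma aux_comm_pow {A : Type*} [CStarAlgebra A] {x y : A} {δ : ℝ} (hδ : 0 ≤ δ)
    (hx : ‖x‖ ≤ 1) (hy : ‖y‖ ≤ 1) (h : ‖x * y - y * x‖ ≤ δ) (l s : ℕ) :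
    ‖x ^ l * y ^ s - y ^ s * x ^ l‖ ≤ l * s * δ := by
  induction l with
  | zero => simp
  | succ l ih =>
    have key : x ^ (l + 1) * y ^ s - y ^ s * x ^ (l + 1)
        = x * (x ^ l * y ^ s - y ^ s * x ^ l) + (x * y ^ s - y ^ s * x) * x ^ l := by
      rw [pow_succ']; noncomm_ring
    rw [key]
    calc ‖x * (x ^ l * y ^ s - y ^ s * x ^ l) + (x * y ^ s - y ^ s * x) * x ^ l‖
        ≤ ‖x‖ * ‖x ^ l * y ^ s - y ^ s * x ^ l‖ + ‖x * y ^ s - y ^ s * x‖ * ‖x ^ l‖ :=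
          le_trans (norm_add_le _ _) (add_le_add (norm_mul_le _ _) (norm_mul_le _ _))
      _ ≤ 1 * ((l : ℝ) * s * δ) + ((s : ℝ) * δ) * 1 :=
          add_le_add (mul_le_mul hx ih (norm_nonneg _) zero_le_one)
            (mul_le_mul (aux_comm_one hδ hy h s) (aux_norm_pow_le_one hx l) (norm_nonneg _)
              (by positivity))
      _ = (l + 1 : ℕ) * s * δ := by push_cast; ring

theorem stmt0 {A : Type*} [CStarAlgebra A] (δ : ℝ) (hδ : 0 ≤ δ) (a : A)
    (ha : ‖a‖ ≤ 1) (hcomm : ‖a * star a - star a * a‖ ≤ δ)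
    (p q : (ℕ × ℕ) →₀ ℂ) :
    ‖polyEvalA p a * polyEvalA q a - polyEvalA (polyConv p q) a‖ ≤
      (p.sum fun kl c => q.sum fun st d => (kl.2 : ℝ) * (st.1 : ℝ) * ‖c‖ * ‖d‖) * δ := by
  set b := star a with hb
  have hbnorm : ‖b‖ ≤ 1 := by rwa [hb, norm_star]
  have hcomm' : ‖b * a - a * b‖ ≤ δ := by
    rw [← neg_sub (a * b) (b * a), norm_neg]; exact hcomm
  set g : ℕ × ℕ → A := fun kl => a ^ kl.1 * b ^ kl.2 with hg
  -- key term bound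
  have hterm : ∀ k l s t : ℕ,
      ‖g (k, l) * g (s, t) - g (k + s, l + t)‖ ≤ (l : ℝ) * s * δ := by
    intro k l s t
    have heq : g (k, l) * g (s, t) - g (k + s, l + t)
        = a ^ k * ((b ^ l * a ^ s - a ^ s * b ^ l) * b ^ t) := by
      simp only [hg, pow_add]
      noncomm_ring
    rw [heq]
    calc ‖a ^ k * ((b ^ l * a ^ s - a ^ s * b ^ l) * b ^ t)‖
        ≤ ‖a ^ k‖ * ‖(b ^ l * a ^ s - a ^ s * b ^ l) * b ^ t‖ := norm_mul_le _ _
      _ ≤ 1 * (((l : ℝ) * s * δ) * 1) :=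
          mul_le_mul (aux_norm_pow_le_one ha k)
            (le_trans (norm_mul_le _ _)
              (mul_le_mul (aux_comm_pow hδ hbnorm ha hcomm' l s)
                (aux_norm_pow_le_one hbnorm t) (norm_nonneg _) (by positivity)))
            (norm_nonneg _) zero_le_one
      _ = (l : ℝ) * s * δ := by ring
  -- rewrite the evaluation of the convolution
  have hconv : polyEvalA (polyConv p q) a
      = p.sum fun kl c => q.sum fun st d => (c * d) • g (kl.1 + st.1, kl.2 + st.2) := by
    have h0 : polyEvalA (polyConv p q) a = Finsupp.linearCombination ℂ g (polyConv p q) := rfl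
    rw [h0, polyConv, map_finsuppSum]
    refine Finsupp.sum_congr fun kl _ => ?_
    rw [map_finsuppSum]
    exact Finsupp.sum_congr fun st _ => Finsupp.linearCombination_single ℂ _ _
  have hmul : polyEvalA p a * polyEvalA q a
      = p.sum fun kl c => q.sum fun st d => (c * d) • (g kl * g st) := by
    rw [polyEvalA, polyEvalA, Finsupp.sum_mul]
    refine Finsupp.sum_congr fun kl _ => ?_
    rw [Finsupp.mul_sum]
    exact Finsupp.sum_congr fun st _ => smul_mul_smul_comm _ _ _ _
  rw [hconv, hmul]
  simp only [Finsupp.sum]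
  rw [← Finset.sum_sub_distrib, Finset.sum_mul]
  refine le_trans (norm_sum_le _ _) (Finset.sum_le_sum fun kl _ => ?_)
  rw [← Finset.sum_sub_distrib, Finset.sum_mul]
  refine le_trans (norm_sum_le _ _) (Finset.sum_le_sum fun st _ => ?_)
  rw [← smul_sub, norm_smul, norm_mul]
  calc ‖p kl‖ * ‖q st‖ * ‖g kl * g st - g (kl.1 + st.1, kl.2 + st.2)‖
      ≤ ‖p kl‖ * ‖q st‖ * ((kl.2 : ℝ) * st.1 * δ) :=
        mul_le_mul_of_nonneg_left (hterm kl.1 kl.2 st.1 st.2) (by positivity)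
    _ = (kl.2 : ℝ) * st.1 * ‖p kl‖ * ‖q st‖ * δ := by ring
end

section
/- Let A be a unital C*-algebra, let 0 ≤ γ < 1, and let b ∈ A satisfy ‖b*b − 1‖ ≤ γ and ‖bb* − 1‖ ≤ γ. Then b and b*b are invertible, the element u = b·(b*b)^{−1/2} is unitary, and ‖b − u‖ ≤ √(1+γ)·(1/√(1−γ) − 1). -/
/-!
Since `‖b⋆b - 1‖ ≤ γ < 1`, the spectrum of `a = b⋆b` lies in `[1 - γ, 1 + γ] ⊆ (0, ∞)`, and likewise
for `bb⋆`; so both are invertible, hence so is `b`. With `c = a^{-1/2}` one has `(bc)⋆(bc) = cac = 1`,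
and an invertible isometry is unitary. Finally `b - bc = b(1 - c)`, where `‖b‖² = ‖a‖ ≤ 1 + γ` and
`‖1 - c‖ = sup |1 - x^{-1/2}|` over the spectrum, which is at most `(1 - γ)^{-1/2} - 1`.
-/

open Set

theorem isUnit_of_isUnit_mul_of_isUnit_mul {M : Type*} [Monoid M] {x b y : M}
    (hl : IsUnit (x * b)) (hr : IsUnit (b * y)) : IsUnit b := by
  obtain ⟨l, hl⟩ := hl.exists_left_inv
  obtain ⟨r, hr⟩ := hr.exists_right_inv
  exact isUnit_iff_exists_and_exists.mpr ⟨⟨y * r, by rwa [← mul_assoc]⟩, ⟨l * x, by rwa [mul_assoc]⟩⟩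

theorem spectrum_subset_Icc_of_norm_sub_one_le {A : Type*} [NormedRing A] [StarRing A]
    [CStarRing A] [NormedAlgebra ℝ A] [CompleteSpace A] {a : A} {γ : ℝ} (h : ‖a - 1‖ ≤ γ) :
    spectrum ℝ a ⊆ Icc (1 - γ) (1 + γ) := by
  intro x hx
  have : Nontrivial A := not_subsingleton_iff_nontrivial.mp fun _ ↦ by
    simp [spectrum.of_subsingleton] at hx
  have hx1 : x - 1 ∈ spectrum ℝ (a - algebraMap ℝ A 1) := by
    rw [← spectrum.sub_singleton_eq]
    exact sub_mem_sub hx rfl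
  have := (spectrum.norm_le_norm_of_mem hx1).trans (by simpa using h)
  rw [Real.norm_eq_abs, abs_le] at this
  constructor <;> linarith [this.1, this.2]

theorem Real.abs_one_sub_inv_sqrt_le {γ x : ℝ} (hγ : γ < 1) (hx : x ∈ Icc (1 - γ) (1 + γ)) :
    |1 - (√x)⁻¹| ≤ 1 / √(1 - γ) - 1 := by
  obtain ⟨hx₁, hx₂⟩ := hx
  have hp : 0 < √(1 - γ) := Real.sqrt_pos.mpr (by linarith)
  have hs : 0 < √x := hp.trans_le (Real.sqrt_le_sqrt hx₁)
  have hq : 0 < √(1 + γ) := hs.trans_le (Real.sqrt_le_sqrt hx₂)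
  -- `√(1-γ)` and `√(1+γ)` have mean square `1`, so the mean of their inverses is at least `1`
  have hpq : 2 ≤ (√(1 - γ))⁻¹ + (√(1 + γ))⁻¹ := by
    have hsq : √(1 - γ) ^ 2 + √(1 + γ) ^ 2 = 2 := by
      rw [Real.sq_sqrt (by linarith), Real.sq_sqrt (by linarith)]; ring
    rw [inv_add_inv hp.ne' hq.ne', le_div_iff₀ (by positivity)]
    nlinarith [sq_nonneg (√(1 - γ) - √(1 + γ)), sq_nonneg (√(1 - γ) * √(1 + γ) - 1), mul_pos hp hq]
  have hlo : (√x)⁻¹ ≤ (√(1 - γ))⁻¹ := inv_anti₀ hp (Real.sqrt_le_sqrt hx₁)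
  have hhi : (√(1 + γ))⁻¹ ≤ (√x)⁻¹ := inv_anti₀ hs (Real.sqrt_le_sqrt hx₂)
  rw [abs_le, one_div]
  constructor <;> linarith

theorem Real.continuousOn_inv_sqrt {s : Set ℝ} (hs : ∀ x ∈ s, 0 < x) :
    ContinuousOn (fun t : ℝ ↦ (√t)⁻¹) s :=
  Real.continuous_sqrt.continuousOn.inv₀ fun x hx ↦ (Real.sqrt_pos.mpr (hs x hx)).ne'

section CFC

variable {A : Type*} [Ring A] [StarRing A] [TopologicalSpace A] [Algebra ℝ A]
  [ContinuousFunctionalCalculus ℝ A IsSelfAdjoint]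

theorem cfc_inv_sqrt_mul_mul_cfc_inv_sqrt {a : A} (ha : IsSelfAdjoint a)
    (hpos : ∀ x ∈ spectrum ℝ a, 0 < x) :
    cfc (fun t : ℝ ↦ (√t)⁻¹) a * a * cfc (fun t : ℝ ↦ (√t)⁻¹) a = 1 := by
  have hf := Real.continuousOn_inv_sqrt hpos
  calc _ = cfc (fun t : ℝ ↦ (√t)⁻¹ * t * (√t)⁻¹) a := by
        rw [cfc_mul _ _ a, cfc_mul _ _ a hf, cfc_id' ℝ a]
    _ = cfc (fun _ : ℝ ↦ (1 : ℝ)) a := cfc_congr fun x hx ↦ by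
        have hs : √x ≠ 0 := (Real.sqrt_pos.mpr (hpos x hx)).ne'
        field_simp
        exact (Real.sq_sqrt (hpos x hx).le).symm
    _ = 1 := cfc_const_one ℝ a

end CFC

theorem stmt7_general {A : Type*} [CStarAlgebra A]
    (γ : ℝ) (hγ1 : γ < 1) (b : A)
    (h1 : ‖star b * b - 1‖ ≤ γ) (h2 : ‖b * star b - 1‖ ≤ γ) :
    IsUnit b ∧ IsUnit (star b * b) ∧
      b * cfc (fun t : ℝ => (Real.sqrt t)⁻¹) (star b * b) ∈ unitary A ∧
      ‖b - b * cfc (fun t : ℝ => (Real.sqrt t)⁻¹) (star b * b)‖ ≤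
        Real.sqrt (1 + γ) * (1 / Real.sqrt (1 - γ) - 1) := by
  have hγ0 : 0 ≤ γ := (norm_nonneg _).trans h1
  have hspec₁ := spectrum_subset_Icc_of_norm_sub_one_le h1
  have hspec₂ := spectrum_subset_Icc_of_norm_sub_one_le h2
  have hpos : ∀ x ∈ spectrum ℝ (star b * b), 0 < x := fun x hx ↦ by
    linarith [(hspec₁ hx).1]
  have hunit₁ : IsUnit (star b * b) :=
    spectrum.isUnit_of_zero_notMem ℝ fun h0 ↦ by linarith [(hspec₁ h0).1]
  have hunit₂ : IsUnit (b * star b) :=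
    spectrum.isUnit_of_zero_notMem ℝ fun h0 ↦ by linarith [(hspec₂ h0).1]
  have hb : IsUnit b := isUnit_of_isUnit_mul_of_isUnit_mul hunit₁ hunit₂
  have hf := Real.continuousOn_inv_sqrt hpos
  set c := cfc (fun t : ℝ ↦ (√t)⁻¹) (star b * b)
  have hc : IsUnit c := isUnit_cfc_iff _ _ hf |>.mpr fun x hx ↦ by
    simpa using (Real.sqrt_pos.mpr (hpos x hx)).ne'
  have hu : b * c ∈ unitary A := by
    refine (hb.mul hc).mem_unitary_of_star_mul_self ?_
    rw [star_mul, (cfc_predicate _ _ : IsSelfAdjoint c).star_eq, mul_assoc, ← mul_assoc (star b),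
      ← mul_assoc]
    exact cfc_inv_sqrt_mul_mul_cfc_inv_sqrt (.star_mul_self b) hpos
  have hnorm_b : ‖b‖ ≤ √(1 + γ) := by
    rw [← Real.sqrt_sq (norm_nonneg b), sq, ← CStarRing.norm_star_mul_self,
      ← cfc_id' ℝ (star b * b)]
    refine Real.sqrt_le_sqrt (norm_cfc_le (by linarith) fun x hx ↦ ?_)
    rw [Real.norm_eq_abs, abs_le]
    constructor <;> linarith [(hspec₁ hx).1, (hspec₁ hx).2]
  have hnorm_c : ‖1 - c‖ ≤ 1 / √(1 - γ) - 1 := by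
    rw [← cfc_const_one ℝ (star b * b), ← cfc_sub _ _ _ (by fun_prop) hf]
    refine norm_cfc_le ?_ fun x hx ↦ ?_
    · exact sub_nonneg.mpr <| one_le_one_div (Real.sqrt_pos.mpr (by linarith))
        (Real.sqrt_le_one.mpr (by linarith))
    · exact (Real.norm_eq_abs _).trans_le (Real.abs_one_sub_inv_sqrt_le hγ1 (hspec₁ hx))
  refine ⟨hb, hunit₁, hu, ?_⟩
  calc ‖b - b * c‖ = ‖b * (1 - c)‖ := by rw [mul_sub, mul_one]
    _ ≤ ‖b‖ * ‖1 - c‖ := norm_mul_le _ _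
    _ ≤ _ := mul_le_mul hnorm_b hnorm_c (norm_nonneg _) (Real.sqrt_nonneg _)

theorem stmt7 {A : Type*} [CStarAlgebra A] [PartialOrder A] [StarOrderedRing A]
    (γ : ℝ) (hγ0 : 0 ≤ γ) (hγ1 : γ < 1) (b : A)
    (h1 : ‖star b * b - 1‖ ≤ γ) (h2 : ‖b * star b - 1‖ ≤ γ) :
    IsUnit b ∧ IsUnit (star b * b) ∧
      b * cfc (fun t : ℝ => (Real.sqrt t)⁻¹) (star b * b) ∈ unitary A ∧
      ‖b - b * cfc (fun t : ℝ => (Real.sqrt t)⁻¹) (star b * b)‖ ≤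
        Real.sqrt (1 + γ) * (1 / Real.sqrt (1 - γ) - 1) :=
  stmt7_general γ hγ1 b h1 h2
end

section
/- There is no constant C ≥ 0 such that for every δ ∈ (0,1), every a ∈ M₂(ℂ) with ‖a‖ ≤ 1 and ‖a a* − a* a‖ ≤ δ (operator norm), and every finitely supported family of complex coefficients p, one has ‖p(a,a*)‖ ≤ p_max + C·δ. In fact, for the matrix a = [[0, √δ],[0,0]] ∈ M₂(ℂ) and every ε ∈ (0,1) there exists a finitely supported coefficient family p with p_max ≤ 2 + ε² and ‖p(a,a*)‖ = √δ/ε. -/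
open scoped ComplexConjugate Matrix.Norms.L2Operator

/-- The function `z ↦ p(z, z̄) = ∑ p_{kl} z^k conj(z)^l`. -/
noncomputable def polyEvalC (p : (ℕ × ℕ) →₀ ℂ) (z : ℂ) : ℂ :=
  p.sum fun kl c => c * z ^ kl.1 * (conj z) ^ kl.2

/-- `p_max = sup_{|z| ≤ 1} |p(z, z̄)|`. -/
noncomputable def polyMax (p : (ℕ × ℕ) →₀ ℂ) : ℝ :=
  sSup ((fun z => ‖polyEvalC p z‖) '' Metric.closedBall (0 : ℂ) 1)

/-! For `a = [[0, s], [0, 0]]` we have `a² = 0`, so in `p(a, a*)` every monomial `aᵏ (a*)ˡ` with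
`k ≥ 2` vanishes. The polynomial `p(z, z̄) = ε⁻¹ z (1 - |z|²)ⁿ` has only monomials with `k = l + 1`,
hence `p(a, a*) = ε⁻¹ a` has norm `s / ε`; on the other hand `√n r (1 - r²)ⁿ ≤ 1` for `r ∈ [0, 1]`
(AM-GM and `(1 + n r²)(1 - r²)ⁿ ≤ (1 - r⁴)ⁿ`), so `p_max ≤ 1` once `n ≥ ε⁻²`. With `s = 1/2`,
`‖[a, a*]‖ = 1/4`, and `ε` small this beats `p_max + C/4` for any `C`. -/

open Finset Finsupp Matrix

section Evaluation

variable {ι : Type*} (s : Finset ι) (kl : ι → ℕ × ℕ) (c : ι → ℂ)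

lemma polyEvalC_sum_single (z : ℂ) :
    polyEvalC (∑ i ∈ s, single (kl i) (c i)) z =
      ∑ i ∈ s, c i * z ^ (kl i).1 * conj z ^ (kl i).2 := by
  rw [polyEvalC, ← sum_finsetSum_index (fun _ => by simp) (fun _ _ _ => by ring)]
  exact Finset.sum_congr rfl fun i _ => sum_single_index (by simp)

lemma polyEvalA_sum_single {A : Type*} [Ring A] [StarRing A] [Algebra ℂ A] (a : A) :
    polyEvalA (∑ i ∈ s, single (kl i) (c i)) a =
      ∑ i ∈ s, c i • (a ^ (kl i).1 * star a ^ (kl i).2) := by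
  unfold polyEvalA
  rw [← sum_finsetSum_index]
  · exact Finset.sum_congr rfl fun i _ => sum_single_index (zero_smul ℂ _)
  · exact fun _ => zero_smul ℂ _
  · exact fun _ _ _ => add_smul _ _ _

lemma polyMax_le {p : (ℕ × ℕ) →₀ ℂ} {M : ℝ} (hM : 0 ≤ M)
    (hp : ∀ z : ℂ, ‖z‖ ≤ 1 → ‖polyEvalC p z‖ ≤ M) : polyMax p ≤ M := by
  refine Real.sSup_le ?_ hM
  rintro _ ⟨z, hz, rfl⟩
  exact hp z (by simpa using hz)

end Evaluation

/-- The coefficients of `c z (1 - z z̄)ⁿ`, expanded by the binomial theorem. -/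
noncomputable def bumpCoeffs (c : ℝ) (n : ℕ) : (ℕ × ℕ) →₀ ℂ :=
  ∑ k ∈ range (n + 1), single (k + 1, k) ((c : ℂ) * (-1) ^ k * n.choose k)

lemma polyEvalC_bumpCoeffs (c : ℝ) (n : ℕ) (z : ℂ) :
    polyEvalC (bumpCoeffs c n) z = c * z * (1 - z * conj z) ^ n := by
  rw [bumpCoeffs, polyEvalC_sum_single, sub_eq_neg_add, add_pow, Finset.mul_sum]
  refine Finset.sum_congr rfl fun k _ => ?_
  rw [neg_pow (z * conj z), mul_pow, one_pow]
  ring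

lemma polyEvalA_bumpCoeffs {A : Type*} [Ring A] [StarRing A] [Algebra ℂ A] (c : ℝ) (n : ℕ)
    {a : A} (ha : a ^ 2 = 0) : polyEvalA (bumpCoeffs c n) a = (c : ℂ) • a := by
  rw [bumpCoeffs, polyEvalA_sum_single, Finset.sum_eq_single_of_mem 0 (by simp)]
  · simp
  · intro k _ hk
    rw [pow_eq_zero_of_le (by omega) ha, zero_mul, smul_zero]

lemma sqrt_mul_mul_one_sub_sq_pow_le_one (n : ℕ) {r : ℝ} (hr0 : 0 ≤ r) (hr1 : r ≤ 1) :
    √n * r * (1 - r ^ 2) ^ n ≤ 1 := by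
  have hr2 : r ^ 2 ≤ 1 := by nlinarith
  have ht : 0 ≤ (1 - r ^ 2) ^ n := pow_nonneg (by linarith) n
  have hamgm : √n * r ≤ 1 + n * r ^ 2 := by
    nlinarith [sq_nonneg (√n * r - 1), Real.sq_sqrt (Nat.cast_nonneg (α := ℝ) n)]
  calc √n * r * (1 - r ^ 2) ^ n ≤ (1 + n * r ^ 2) * (1 - r ^ 2) ^ n := by gcongr
    _ ≤ (1 + r ^ 2) ^ n * (1 - r ^ 2) ^ n := by
        gcongr; exact one_add_mul_le_pow (by nlinarith) n
    _ = (1 - r ^ 4) ^ n := by rw [← mul_pow]; ring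
    _ ≤ 1 := pow_le_one₀ (by nlinarith) (by nlinarith)

lemma polyMax_bumpCoeffs_le_one {c : ℝ} {n : ℕ} (hc : 0 ≤ c) (hcn : c ^ 2 ≤ n) :
    polyMax (bumpCoeffs c n) ≤ 1 := by
  refine polyMax_le zero_le_one fun z hz => ?_
  have hcn : c ≤ √n := Real.le_sqrt_of_sq_le hcn
  have hr : 0 ≤ ‖z‖ * (1 - ‖z‖ ^ 2) ^ n :=
    mul_nonneg (norm_nonneg z) (pow_nonneg (by nlinarith [norm_nonneg z]) n)
  rw [polyEvalC_bumpCoeffs, Complex.mul_conj', ← Complex.ofReal_pow, ← Complex.ofReal_one,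
    ← Complex.ofReal_sub, norm_mul, norm_mul, norm_pow, Complex.norm_real, Complex.norm_real,
    Real.norm_of_nonneg hc, Real.norm_of_nonneg (by nlinarith [norm_nonneg z]), mul_assoc]
  calc c * (‖z‖ * (1 - ‖z‖ ^ 2) ^ n) ≤ √n * (‖z‖ * (1 - ‖z‖ ^ 2) ^ n) := by gcongr
    _ ≤ 1 := by
      rw [← mul_assoc]; exact sqrt_mul_mul_one_sub_sq_pow_le_one n (norm_nonneg z) hz

def nilpotentBlock (s : ℂ) : Matrix (Fin 2) (Fin 2) ℂ := !![0, s; 0, 0]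

lemma nilpotentBlock_sq (s : ℂ) : nilpotentBlock s ^ 2 = 0 := by
  rw [sq, nilpotentBlock, mul_fin_two, ← Matrix.ext_iff]
  simp

lemma star_nilpotentBlock (s : ℂ) : star (nilpotentBlock s) = !![0, 0; conj s, 0] := by
  ext i j; fin_cases i <;> fin_cases j <;> simp [nilpotentBlock]

lemma norm_diagonal_fin_two (x y : ℂ) : ‖diagonal ![x, y]‖ = max ‖x‖ ‖y‖ := by
  simp [l2_opNorm_diagonal, Pi.norm_def, Fin.univ_succ]

lemma norm_nilpotentBlock (s : ℂ) : ‖nilpotentBlock s‖ = ‖s‖ := by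
  have h : star (nilpotentBlock s) * nilpotentBlock s = diagonal ![0, (‖s‖ ^ 2 : ℂ)] := by
    rw [star_nilpotentBlock, nilpotentBlock, mul_fin_two, diagonal_vec2]
    simp [Complex.conj_mul']
  have h2 : ‖nilpotentBlock s‖ ^ 2 = ‖s‖ ^ 2 := by
    rw [sq, ← CStarRing.norm_star_mul_self, h, norm_diagonal_fin_two]
    simp
  exact (sq_eq_sq₀ (norm_nonneg _) (norm_nonneg _)).1 h2

lemma norm_commutator_nilpotentBlock (s : ℂ) :
    ‖nilpotentBlock s * star (nilpotentBlock s) - star (nilpotentBlock s) * nilpotentBlock s‖ =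
      ‖s‖ ^ 2 := by
  have h : nilpotentBlock s * star (nilpotentBlock s) - star (nilpotentBlock s) * nilpotentBlock s
      = diagonal ![(‖s‖ ^ 2 : ℂ), -(‖s‖ ^ 2 : ℂ)] := by
    rw [star_nilpotentBlock, nilpotentBlock, mul_fin_two, mul_fin_two, diagonal_vec2]
    ext i j; fin_cases i <;> fin_cases j <;> simp [Complex.mul_conj', Complex.conj_mul']
  rw [h, norm_diagonal_fin_two]
  simp

lemma exists_polyMax_le_one_norm_polyEvalA_eq {s : ℝ} (hs : 0 ≤ s) {ε : ℝ} (hε : 0 < ε) :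
    ∃ p : (ℕ × ℕ) →₀ ℂ, polyMax p ≤ 1 ∧ ‖polyEvalA p (nilpotentBlock s)‖ = s / ε := by
  refine ⟨bumpCoeffs ε⁻¹ ⌈ε⁻¹ ^ 2⌉₊, polyMax_bumpCoeffs_le_one (by positivity) (Nat.le_ceil _), ?_⟩
  rw [polyEvalA_bumpCoeffs _ _ (nilpotentBlock_sq _), norm_smul, norm_nilpotentBlock,
    Complex.norm_real, Complex.norm_real, Real.norm_of_nonneg (by positivity),
    Real.norm_of_nonneg hs, div_eq_inv_mul]

/-- `M₂(ℂ)`, carrying the (`L²`-)operator norm. -/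
theorem stmt9 :
    (¬ ∃ C : ℝ, 0 ≤ C ∧
        ∀ δ : ℝ, 0 < δ → δ < 1 →
          ∀ a : Matrix (Fin 2) (Fin 2) ℂ, ‖a‖ ≤ 1 → ‖a * star a - star a * a‖ ≤ δ →
            ∀ p : (ℕ × ℕ) →₀ ℂ, ‖polyEvalA p a‖ ≤ polyMax p + C * δ) ∧
    (∀ δ : ℝ, 0 < δ → δ < 1 → ∀ ε : ℝ, 0 < ε → ε < 1 →
        ∃ p : (ℕ × ℕ) →₀ ℂ, polyMax p ≤ 2 + ε ^ 2 ∧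
          ‖polyEvalA p (!![0, (Real.sqrt δ : ℂ); 0, 0])‖ = Real.sqrt δ / ε) := by
  refine ⟨?_, fun δ _ _ ε hε _ => ?_⟩
  · rintro ⟨C, hC, hbound⟩
    obtain ⟨p, hpmax, hpa⟩ := exists_polyMax_le_one_norm_polyEvalA_eq
      (s := 1 / 2) (by norm_num) (ε := 1 / (C + 3)) (by positivity)
    have hnorm : ‖nilpotentBlock (1 / 2 : ℝ)‖ ≤ 1 := by
      rw [norm_nilpotentBlock]; norm_num
    have hcomm : ‖nilpotentBlock (1 / 2 : ℝ) * star (nilpotentBlock (1 / 2 : ℝ)) -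
        star (nilpotentBlock (1 / 2 : ℝ)) * nilpotentBlock (1 / 2 : ℝ)‖ ≤ 1 / 4 := by
      rw [norm_commutator_nilpotentBlock]; norm_num
    have hle : (1 / 2) / (1 / (C + 3)) ≤ 1 + C * (1 / 4) :=
      calc (1 / 2) / (1 / (C + 3)) = ‖polyEvalA p (nilpotentBlock (1 / 2 : ℝ))‖ := hpa.symm
        _ ≤ polyMax p + C * (1 / 4) := hbound _ (by norm_num) (by norm_num) _ hnorm hcomm p
        _ ≤ 1 + C * (1 / 4) := by gcongr
    rw [div_div_eq_mul_div, div_one] at hle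
    linarith
  · obtain ⟨p, hpmax, hpa⟩ := exists_polyMax_le_one_norm_polyEvalA_eq (Real.sqrt_nonneg δ) hε
    exact ⟨p, hpmax.trans (by linarith [sq_nonneg ε]), hpa⟩
end

section
/- Let q ∈ ℝ[x₁,…,x_n] have degree d ≥ 1. Then for all x, y ∈ [−1,1]ⁿ one has |q(x) − q(y)| ≤ d²·n^{d−1/2}·‖q‖·|x − y|, where |x − y| is the Euclidean norm. -/
open MvPolynomial

/-- The weighted coefficient norm `‖q‖ = max_α |q_α| · α₁!⋯α_n!/(α₁+⋯+α_n)!`. -/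
noncomputable def wnorm {n : ℕ} (q : MvPolynomial (Fin n) ℝ) : ℝ :=
  ↑(q.support.sup fun α =>
      ‖coeff α q‖₊ * (∏ i, ((α i).factorial : NNReal)) /
        (((α.sum fun _ e => e).factorial : NNReal)))

open Finset

lemma pow_diff_le (t s : ℝ) (ht : |t| ≤ 1) (hs : |s| ≤ 1) (k : ℕ) :
    |t ^ k - s ^ k| ≤ k * |t - s| := by
  induction k with
  | zero => simp
  | succ k ih =>
    have : t ^ (k+1) - s ^ (k+1) = t * (t ^ k - s ^ k) + (t - s) * s ^ k := by ring
    rw [this]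
    have h1 : |t * (t ^ k - s ^ k)| ≤ 1 * (k * |t - s|) := by
      rw [abs_mul]
      exact mul_le_mul ht ih (abs_nonneg _) zero_le_one
    have h2 : |(t - s) * s ^ k| ≤ |t - s| * 1 := by
      rw [abs_mul]
      refine mul_le_mul_of_nonneg_left ?_ (abs_nonneg _)
      calc |s ^ k| = |s| ^ k := abs_pow s k
        _ ≤ 1 ^ k := pow_le_pow_left₀ (abs_nonneg _) hs k
        _ = 1 := one_pow k
    calc |t * (t ^ k - s ^ k) + (t - s) * s ^ k|
        ≤ |t * (t ^ k - s ^ k)| + |(t - s) * s ^ k| := abs_add_le _ _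
      _ ≤ 1 * (k * |t - s|) + |t - s| * 1 := add_le_add h1 h2
      _ = (k + 1 : ℕ) * |t - s| := by push_cast; ring

-- L2: monomial difference on the cube

lemma prod_pow_diff_le {n : ℕ} (x y : Fin n → ℝ) (hx : ∀ i, |x i| ≤ 1)
    (hy : ∀ i, |y i| ≤ 1) (α : Fin n → ℕ) (s : Finset (Fin n)) :
    |(∏ i ∈ s, x i ^ α i) - ∏ i ∈ s, y i ^ α i| ≤ ∑ i ∈ s, (α i : ℝ) * |x i - y i| := by
  induction s using Finset.induction_on with
  | empty => simp
  | @insert a s ha ih =>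
    rw [Finset.prod_insert ha, Finset.prod_insert ha, Finset.sum_insert ha]
    have key : x a ^ α a * ∏ i ∈ s, x i ^ α i - y a ^ α a * ∏ i ∈ s, y i ^ α i
        = x a ^ α a * ((∏ i ∈ s, x i ^ α i) - ∏ i ∈ s, y i ^ α i)
          + (x a ^ α a - y a ^ α a) * ∏ i ∈ s, y i ^ α i := by ring
    rw [key]
    have hxa : |x a ^ α a| ≤ 1 := by
      rw [abs_pow]; calc |x a| ^ α a ≤ 1 ^ α a := by gcongr; exact hx a
                      _ = 1 := one_pow _
    have hyp : |∏ i ∈ s, y i ^ α i| ≤ 1 := by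
      rw [abs_prod]
      apply Finset.prod_le_one
      · intro i _; exact abs_nonneg _
      · intro i _
        rw [abs_pow]
        calc |y i| ^ α i ≤ 1 ^ α i := pow_le_pow_left₀ (abs_nonneg _) (hy i) _
          _ = 1 := one_pow _
    calc |x a ^ α a * ((∏ i ∈ s, x i ^ α i) - ∏ i ∈ s, y i ^ α i)
          + (x a ^ α a - y a ^ α a) * ∏ i ∈ s, y i ^ α i|
        ≤ |x a ^ α a * ((∏ i ∈ s, x i ^ α i) - ∏ i ∈ s, y i ^ α i)|
          + |(x a ^ α a - y a ^ α a) * ∏ i ∈ s, y i ^ α i| := abs_add_le _ _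
      _ ≤ 1 * (∑ i ∈ s, (α i : ℝ) * |x i - y i|) + ((α a : ℝ) * |x a - y a|) * 1 := by
          rw [abs_mul, abs_mul]
          refine add_le_add (mul_le_mul hxa ih (abs_nonneg _) zero_le_one)
            (mul_le_mul (pow_diff_le _ _ (hx a) (hy a) _) hyp (abs_nonneg _) ?_)
          positivity
      _ = (α a : ℝ) * |x a - y a| + ∑ i ∈ s, (α i : ℝ) * |x i - y i| := by ring

lemma sum_multinomial_eq {n : ℕ} (k : ℕ) :
    ∑ f ∈ piAntidiag (univ : Finset (Fin n)) k, Nat.multinomial univ f = n ^ k := by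
  have := Finset.sum_pow_eq_sum_piAntidiag (univ : Finset (Fin n)) (fun _ => (1 : ℕ)) k
  simpa using this.symm

-- L4: recurrence

lemma mul_multinomial_update {n : ℕ} (f : Fin n → ℕ) (i : Fin n) (hf : f i ≠ 0) :
    f i * Nat.multinomial univ f
      = (∑ j, f j) * Nat.multinomial univ (Function.update f i (f i - 1)) := by
  set g := Function.update f i (f i - 1) with hg
  have hPg : (0:ℕ) < ∏ j, (g j).factorial := Finset.prod_pos fun j _ => Nat.factorial_pos _
  apply Nat.eq_of_mul_eq_mul_right hPg
  have hspecf := Nat.multinomial_spec (univ : Finset (Fin n)) f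
  have hspecg := Nat.multinomial_spec (univ : Finset (Fin n)) g
  have hsumg : ∑ j, g j = (∑ j, f j) - 1 := by
    rw [hg]
    rw [← Finset.sum_erase_add _ _ (Finset.mem_univ i),
        ← Finset.sum_erase_add _ f (Finset.mem_univ i)]
    have : ∑ j ∈ univ.erase i, Function.update f i (f i - 1) j
        = ∑ j ∈ univ.erase i, f j :=
      Finset.sum_congr rfl fun j hj => Function.update_of_ne (Finset.mem_erase.1 hj).1 _ _
    rw [this, Function.update_self]
    omega
  have hsum_pos : 1 ≤ ∑ j, f j :=
    le_trans (Nat.one_le_iff_ne_zero.2 hf) (Finset.single_le_sum (fun j _ => Nat.zero_le _) (Finset.mem_univ i))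
  have hprodg : ∏ j, (g j).factorial = (f i - 1).factorial * ∏ j ∈ univ.erase i, (f j).factorial := by
    rw [← Finset.mul_prod_erase _ _ (Finset.mem_univ i), hg, Function.update_self]
    congr 1
    exact Finset.prod_congr rfl fun j hj => by
      rw [Function.update_of_ne (Finset.mem_erase.1 hj).1]
  have hprodf : ∏ j, (f j).factorial = (f i).factorial * ∏ j ∈ univ.erase i, (f j).factorial :=
    (Finset.mul_prod_erase _ _ (Finset.mem_univ i)).symm
  calc f i * Nat.multinomial univ f * ∏ j, (g j).factorial
      = Nat.multinomial univ f * (f i * (f i - 1).factorial * ∏ j ∈ univ.erase i, (f j).factorial) := by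
        rw [hprodg]; ring
    _ = Nat.multinomial univ f * ((f i).factorial * ∏ j ∈ univ.erase i, (f j).factorial) := by
        rw [← Nat.succ_pred_eq_of_pos (Nat.pos_of_ne_zero hf)]
        rw [Nat.factorial_succ]
        simp [Nat.succ_pred_eq_of_pos (Nat.pos_of_ne_zero hf)]
    _ = (∏ j, (f j).factorial) * Nat.multinomial univ f := by rw [hprodf]; ring
    _ = (∑ j, f j).factorial := hspecf
    _ = (∑ j, f j) * ((∑ j, f j) - 1).factorial := by
        rw [← Nat.succ_pred_eq_of_pos hsum_pos, Nat.factorial_succ]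
        simp [Nat.succ_pred_eq_of_pos hsum_pos]
    _ = (∑ j, f j) * (∑ j, g j).factorial := by rw [hsumg]
    _ = (∑ j, f j) * ((∏ j, (g j).factorial) * Nat.multinomial univ g) := by rw [hspecg]
    _ = (∑ j, f j) * Nat.multinomial univ g * ∏ j, (g j).factorial := by ring

lemma sum_mul_multinomial_le {n : ℕ} (k : ℕ) (i : Fin n) :
    ∑ f ∈ piAntidiag (univ : Finset (Fin n)) (k + 1), f i * Nat.multinomial univ f
      ≤ (k + 1) * n ^ k := by
  classical
  set T := piAntidiag (univ : Finset (Fin n)) (k + 1)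
  set s := T.filter (fun f => f i ≠ 0) with hs
  have h1 : ∑ f ∈ T, f i * Nat.multinomial univ f
      = ∑ f ∈ s, f i * Nat.multinomial univ f := by
    rw [hs]
    refine (Finset.sum_filter_of_ne ?_).symm
    intro f _ hne
    intro h0
    exact hne (by rw [h0, zero_mul])
  have hsumf : ∀ f ∈ s, ∑ j, f j = k + 1 := by
    intro f hf
    have := (Finset.mem_filter.1 hf).1
    exact (Finset.mem_piAntidiag.1 this).1
  set e := fun f : Fin n → ℕ => Function.update f i (f i - 1) with he
  have hinj : Set.InjOn e s := by
    intro f hf f' hf' hef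
    have hfi : f i ≠ 0 := (Finset.mem_filter.1 hf).2
    have hfi' : f' i ≠ 0 := (Finset.mem_filter.1 hf').2
    simp only [he] at hef
    funext j
    by_cases hj : j = i
    · subst hj
      have h3 := congrFun hef j
      simp only [Function.update_self] at h3
      have := Nat.pos_of_ne_zero hfi
      have := Nat.pos_of_ne_zero hfi'
      clear_value T s
      clear hs he h1 hsumf hef
      omega
    · have h3 := congrFun hef j
      simpa [Function.update_of_ne hj] using h3
  have himg : ∀ f ∈ s, e f ∈ piAntidiag (univ : Finset (Fin n)) k := by
    intro f hf
    have hfi : f i ≠ 0 := (Finset.mem_filter.1 hf).2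
    rw [Finset.mem_piAntidiag]
    constructor
    · have h4 : ∑ j, e f j = (∑ j, f j) - 1 := by
        simp only [he]
        rw [← Finset.sum_erase_add _ _ (Finset.mem_univ i),
            ← Finset.sum_erase_add _ f (Finset.mem_univ i)]
        have h2 : ∑ j ∈ univ.erase i, Function.update f i (f i - 1) j
            = ∑ j ∈ univ.erase i, f j :=
          Finset.sum_congr rfl fun j hj => Function.update_of_ne (Finset.mem_erase.1 hj).1 _ _
        rw [h2, Function.update_self]
        have := Nat.pos_of_ne_zero hfi
        clear_value T s
        clear hs he h1 hsumf hinj h2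
        omega
      rw [h4, hsumf f hf, Nat.add_sub_cancel]
    · intro j _; exact Finset.mem_univ j
  calc ∑ f ∈ T, f i * Nat.multinomial univ f
      = ∑ f ∈ s, f i * Nat.multinomial univ f := h1
    _ = ∑ f ∈ s, (k + 1) * Nat.multinomial univ (e f) := by
        refine Finset.sum_congr rfl fun f hf => ?_
        rw [mul_multinomial_update f i (Finset.mem_filter.1 hf).2, hsumf f hf]
    _ = (k + 1) * ∑ f ∈ s, Nat.multinomial univ (e f) := by rw [Finset.mul_sum]
    _ = (k + 1) * ∑ g ∈ s.image e, Nat.multinomial univ g := by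
        rw [Finset.sum_image (fun a ha b hb h => hinj ha hb h)]
    _ ≤ (k + 1) * ∑ g ∈ piAntidiag (univ : Finset (Fin n)) k, Nat.multinomial univ g := by
        refine Nat.mul_le_mul_left _ (Finset.sum_le_sum_of_subset ?_)
        intro g hg
        obtain ⟨f, hf, rfl⟩ := Finset.mem_image.1 hg
        exact himg f hf
    _ = (k + 1) * n ^ k := by rw [sum_multinomial_eq]

lemma support_sum_mul_le {n d : ℕ} (q : MvPolynomial (Fin n) ℝ)
    (hdeg : q.totalDegree = d) (hn : 1 ≤ n) (i : Fin n) :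
    ∑ α ∈ q.support, α i * Nat.multinomial univ ⇑α ≤ d ^ 2 * n ^ (d - 1) := by
  classical
  set g : (Fin n → ℕ) → ℕ := fun f => f i * Nat.multinomial univ f with hg
  have hmem : ∀ α ∈ q.support, (⇑α : Fin n → ℕ) ∈
      (range (d + 1)).biUnion (fun k => piAntidiag (univ : Finset (Fin n)) k) := by
    intro α hα
    rw [Finset.mem_biUnion]
    refine ⟨∑ j, α j, ?_, ?_⟩
    · rw [Finset.mem_range, Nat.lt_succ_iff, ← hdeg]
      have h1 : (α.sum fun _ e => e) = ∑ j, α j :=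
        Finsupp.sum_fintype α (fun _ e => e) (fun _ => rfl)
      rw [← h1]
      exact MvPolynomial.le_totalDegree hα
    · rw [Finset.mem_piAntidiag]
      exact ⟨rfl, fun j _ => Finset.mem_univ j⟩
  have hdisj : (↑(range (d + 1)) : Set ℕ).PairwiseDisjoint
      (fun k => piAntidiag (univ : Finset (Fin n)) k) := by
    intro a _ b _ hab
    simp only [Finset.disjoint_left]
    intro f hfa hfb
    rw [Finset.mem_piAntidiag] at hfa hfb
    exact hab (hfa.1 ▸ hfb.1.symm ▸ rfl)
  calc ∑ α ∈ q.support, α i * Nat.multinomial univ ⇑α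
      = ∑ f ∈ q.support.image (fun α : Fin n →₀ ℕ => ⇑α), g f := by
        refine (Finset.sum_image (g := fun α : Fin n →₀ ℕ => ⇑α) (f := g) ?_).symm
        intro a _ b _ h
        exact DFunLike.coe_injective h
    _ ≤ ∑ f ∈ (range (d + 1)).biUnion (fun k => piAntidiag (univ : Finset (Fin n)) k), g f := by
        apply Finset.sum_le_sum_of_subset
        intro f hf
        obtain ⟨α, hα, rfl⟩ := Finset.mem_image.1 hf
        exact hmem α hα
    _ = ∑ k ∈ range (d + 1), ∑ f ∈ piAntidiag (univ : Finset (Fin n)) k, g f :=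
        Finset.sum_biUnion hdisj
    _ = (∑ k ∈ range d, ∑ f ∈ piAntidiag (univ : Finset (Fin n)) (k + 1), g f)
        + ∑ f ∈ piAntidiag (univ : Finset (Fin n)) 0, g f := Finset.sum_range_succ' _ d
    _ ≤ (∑ k ∈ range d, d * n ^ (d - 1)) + 0 := by
        apply add_le_add
        · apply Finset.sum_le_sum
          intro k hk
          rw [Finset.mem_range] at hk
          calc ∑ f ∈ piAntidiag (univ : Finset (Fin n)) (k + 1), g f
              ≤ (k + 1) * n ^ k := sum_mul_multinomial_le k i
            _ ≤ d * n ^ (d - 1) := by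
                apply Nat.mul_le_mul
                · omega
                · exact Nat.pow_le_pow_right hn (by omega)
        · simp [Finset.piAntidiag_zero, hg]
    _ ≤ d ^ 2 * n ^ (d - 1) := by
        rw [Finset.sum_const, Finset.card_range, add_zero, smul_eq_mul, pow_two, mul_assoc]

lemma coeff_le_wnorm {n : ℕ} (q : MvPolynomial (Fin n) ℝ) (α : Fin n →₀ ℕ)
    (hα : α ∈ q.support) :
    |coeff α q| ≤ wnorm q * Nat.multinomial univ ⇑α := by
  classical
  set W := q.support.sup fun α =>
      ‖coeff α q‖₊ * (∏ i, ((α i).factorial : NNReal)) /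
        (((α.sum fun _ e => e).factorial : NNReal)) with hW
  have hle := Finset.le_sup (f := fun α =>
      ‖coeff α q‖₊ * (∏ i, ((α i).factorial : NNReal)) /
        (((α.sum fun _ e => e).factorial : NNReal))) hα
  rw [← hW] at hle
  set F : ℕ := ∏ i, (α i).factorial with hF
  set S : ℕ := (α.sum fun _ e => e).factorial with hS
  have hcast : (∏ i, ((α i).factorial : NNReal)) = (F : NNReal) := by
    rw [hF]; push_cast; rfl
  rw [hcast] at hle
  have hSne : (S : NNReal) ≠ 0 := Nat.cast_ne_zero.2 (Nat.factorial_ne_zero _)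
  have h2 : ‖coeff α q‖₊ * (F : NNReal) ≤ W * S := by
    rw [div_le_iff₀ (hSne.bot_lt)] at hle
    exact hle
  have hsum : (α.sum fun _ e => e) = ∑ i, α i :=
    Finsupp.sum_fintype α (fun _ e => e) (fun _ => rfl)
  have hspec : F * Nat.multinomial univ ⇑α = S := by
    rw [hF, hS, hsum]
    exact Nat.multinomial_spec univ ⇑α
  have h3 : ‖coeff α q‖₊ * (F : NNReal) ≤ (W * Nat.multinomial univ ⇑α) * F := by
    calc ‖coeff α q‖₊ * (F : NNReal) ≤ W * S := h2
      _ = (W * Nat.multinomial univ ⇑α) * F := by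
          rw [← hspec]; push_cast; ring
  have hFpos : (0 : NNReal) < F := by
    rw [hF]
    exact_mod_cast Finset.prod_pos fun i _ => Nat.factorial_pos _
  have h4 : ‖coeff α q‖₊ ≤ W * Nat.multinomial univ ⇑α :=
    le_of_mul_le_mul_right h3 hFpos
  have := NNReal.coe_le_coe.2 h4
  rw [show ((‖coeff α q‖₊ : NNReal) : ℝ) = |coeff α q| from rfl] at this
  calc |coeff α q| ≤ ((W * Nat.multinomial univ ⇑α : NNReal) : ℝ) := this
    _ = wnorm q * Nat.multinomial univ ⇑α := by
        rw [wnorm, ← hW]; push_cast; ring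

lemma wnorm_nonneg {n : ℕ} (q : MvPolynomial (Fin n) ℝ) : 0 ≤ wnorm q :=
  NNReal.coe_nonneg _

theorem stmt13 (n : ℕ) (q : MvPolynomial (Fin n) ℝ) (d : ℕ) (hd : 1 ≤ d)
    (hdeg : q.totalDegree = d)
    (x y : EuclideanSpace ℝ (Fin n)) (hx : ∀ i, |x i| ≤ 1) (hy : ∀ i, |y i| ≤ 1) :
    |eval (fun i => x i) q - eval (fun i => y i) q| ≤
      (d : ℝ) ^ 2 * (n : ℝ) ^ ((d : ℝ) - 1 / 2) * wnorm q * dist x y := by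
  classical
  -- n ≥ 1
  have hn : 1 ≤ n := by
    by_contra hn
    have hn0 : n = 0 := by omega
    subst hn0
    have : q.totalDegree = 0 := by
      rw [MvPolynomial.totalDegree]
      apply Nat.le_antisymm _ (Nat.zero_le _)
      apply Finset.sup_le
      intro α _
      have : (α.sum fun _ e => e) = ∑ i, α i :=
        Finsupp.sum_fintype α (fun _ e => e) (fun _ => rfl)
      simp [this]
    omega
  set x' : Fin n → ℝ := fun i => x i with hx'
  set y' : Fin n → ℝ := fun i => y i with hy'
  -- step 1: pointwise bound by sum over support
  have key : |eval x' q - eval y' q| ≤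
      wnorm q * ((d:ℝ) ^ 2 * (n:ℝ) ^ (d - 1)) * ∑ i, |x' i - y' i| := by
    rw [MvPolynomial.eval_eq', MvPolynomial.eval_eq', ← Finset.sum_sub_distrib]
    calc |∑ α ∈ q.support, (coeff α q * ∏ i, x' i ^ α i - coeff α q * ∏ i, y' i ^ α i)|
        ≤ ∑ α ∈ q.support, |coeff α q * ∏ i, x' i ^ α i - coeff α q * ∏ i, y' i ^ α i| :=
          Finset.abs_sum_le_sum_abs _ _
      _ ≤ ∑ α ∈ q.support, (wnorm q * Nat.multinomial univ ⇑α) *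
            ∑ i, (α i : ℝ) * |x' i - y' i| := by
          apply Finset.sum_le_sum
          intro α hα
          rw [← mul_sub, abs_mul]
          apply mul_le_mul (coeff_le_wnorm q α hα)
            (prod_pow_diff_le x' y' hx hy ⇑α univ) (abs_nonneg _)
          have := wnorm_nonneg q
          positivity
      _ = wnorm q * ∑ i, (∑ α ∈ q.support, (α i : ℝ) * Nat.multinomial univ ⇑α)
            * |x' i - y' i| := by
          simp_rw [Finset.mul_sum]
          rw [Finset.sum_comm]
          refine Finset.sum_congr rfl fun i _ => ?_
          rw [Finset.sum_mul, Finset.mul_sum]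
          exact Finset.sum_congr rfl fun α _ => by ring
      _ ≤ wnorm q * ∑ i, ((d:ℝ) ^ 2 * (n:ℝ) ^ (d - 1)) * |x' i - y' i| := by
          apply mul_le_mul_of_nonneg_left _ (wnorm_nonneg q)
          apply Finset.sum_le_sum
          intro i _
          apply mul_le_mul_of_nonneg_right _ (abs_nonneg _)
          have h7 := support_sum_mul_le q hdeg hn i
          calc ∑ α ∈ q.support, (α i : ℝ) * Nat.multinomial univ ⇑α
              = ((∑ α ∈ q.support, α i * Nat.multinomial univ ⇑α : ℕ) : ℝ) := by
                push_cast; rfl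
            _ ≤ ((d ^ 2 * n ^ (d - 1) : ℕ) : ℝ) := by exact_mod_cast h7
            _ = (d:ℝ) ^ 2 * (n:ℝ) ^ (d - 1) := by push_cast; rfl
      _ = wnorm q * ((d:ℝ) ^ 2 * (n:ℝ) ^ (d - 1)) * ∑ i, |x' i - y' i| := by
          rw [Finset.mul_sum, Finset.mul_sum]
          congr 1
          ext i
          ring
  -- step 2: ℓ¹–ℓ² comparison
  have hl1 : ∑ i, |x' i - y' i| ≤ Real.sqrt n * dist x y := by
    have hdist : dist x y = Real.sqrt (∑ i, dist (x i) (y i) ^ 2) :=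
      EuclideanSpace.dist_eq x y
    have habs : ∀ i, |x' i - y' i| = dist (x i) (y i) := fun i => (Real.dist_eq _ _).symm
    have hcs : (∑ i, dist (x i) (y i)) ^ 2 ≤ (n : ℝ) * ∑ i, dist (x i) (y i) ^ 2 := by
      have := sq_sum_le_card_mul_sum_sq (s := (univ : Finset (Fin n)))
        (f := fun i => dist (x i) (y i))
      simpa using this
    calc ∑ i, |x' i - y' i| = ∑ i, dist (x i) (y i) := by
          exact Finset.sum_congr rfl fun i _ => habs i
      _ ≤ Real.sqrt ((n:ℝ) * ∑ i, dist (x i) (y i) ^ 2) :=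
          Real.le_sqrt_of_sq_le hcs
      _ = Real.sqrt n * dist x y := by
          rw [Real.sqrt_mul (by positivity), hdist]
  -- step 3: rpow identity
  have hrpow : (n : ℝ) ^ ((d : ℝ) - 1 / 2) = (n:ℝ) ^ (d - 1) * Real.sqrt n := by
    have hn0 : (0:ℝ) < n := by exact_mod_cast hn
    have : ((d : ℝ) - 1 / 2) = ((d - 1 : ℕ) : ℝ) + (1/2 : ℝ) := by
      have : (1:ℕ) ≤ d := hd
      push_cast [Nat.cast_sub hd]
      ring
    rw [this, Real.rpow_add hn0, Real.rpow_natCast, ← Real.rpow_natCast, Real.sqrt_eq_rpow]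
  calc |eval x' q - eval y' q|
      ≤ wnorm q * ((d:ℝ) ^ 2 * (n:ℝ) ^ (d - 1)) * ∑ i, |x' i - y' i| := key
    _ ≤ wnorm q * ((d:ℝ) ^ 2 * (n:ℝ) ^ (d - 1)) * (Real.sqrt n * dist x y) := by
        apply mul_le_mul_of_nonneg_left hl1
        have := wnorm_nonneg q
        positivity
    _ = (d : ℝ) ^ 2 * (n : ℝ) ^ ((d : ℝ) - 1 / 2) * wnorm q * dist x y := by
        rw [hrpow]; ring
end

section
/- Let p ∈ ℝ[x₁,x₂] satisfy p_* := min_{x∈[−1,1]²} p(x) > 0. Then there exist M ∈ ℕ and non-negative real numbers b_α for multiindices α = (α₁,α₂,α₃,α₄) with |α| ≤ M, such that p(x) = Σ_{|α|≤M} b_α · γ₁(x)^{α₁} γ₂(x)^{α₂} γ₃(x)^{α₃} γ₄(x)^{α₄} identically, where γ₁(x) = (1+x₁)/4, γ₂(x) = (1−x₁)/4, γ₃(x) = (1+x₂)/4, γ₄(x) = (1−x₂)/4. -/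
/-!
Substituting `s = (1 + x) / 2` turns `p` into a polynomial `q` that is bounded below by `p_* > 0`
on the unit square. Expanding each monomial `s^k` in the Bernstein basis of degree `n`, the
coefficient of `b_{n,i}(s) = C(n,i) s^i (1 - s)^(n - i)` is `C(i,k) / C(n,k)`, which differs from
`(i / n)^k` by `O(k² / n)`. Hence the tensor Bernstein coefficients of `q` are uniformly
`O(1 / n)`-close to the values of `q` on the grid `(i / n, j / n)`, which are `≥ p_*`; so for large
`n` they are all nonnegative. Since `γ₁ + γ₂ = γ₃ + γ₄ = 1 / 2`, each tensor Bernstein basis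
polynomial in `s` is a positive multiple of a monomial in the `γ`'s.
-/

open MvPolynomial Finset Filter Topology

lemma abs_prod_le_one {ι : Type*} {s : Finset ι} {u : ι → ℝ} (hu : ∀ m ∈ s, |u m| ≤ 1) :
    |∏ m ∈ s, u m| ≤ 1 := by
  rw [abs_prod]
  exact prod_le_one (fun m _ => abs_nonneg _) hu

lemma abs_prod_sub_prod_le {ι : Type*} (s : Finset ι) {u v : ι → ℝ}
    (hu : ∀ m ∈ s, |u m| ≤ 1) (hv : ∀ m ∈ s, |v m| ≤ 1) :
    |∏ m ∈ s, u m - ∏ m ∈ s, v m| ≤ ∑ m ∈ s, |u m - v m| := by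
  induction s using Finset.cons_induction with
  | empty => simp
  | cons a s ha ih =>
    simp only [mem_cons, forall_eq_or_imp] at hu hv
    rw [prod_cons, prod_cons, sum_cons]
    calc |u a * ∏ m ∈ s, u m - v a * ∏ m ∈ s, v m|
        = |u a * (∏ m ∈ s, u m - ∏ m ∈ s, v m) + (u a - v a) * ∏ m ∈ s, v m| := by ring_nf
      _ ≤ |u a| * |∏ m ∈ s, u m - ∏ m ∈ s, v m| + |u a - v a| * |∏ m ∈ s, v m| := by
        rw [← abs_mul, ← abs_mul]; exact abs_add_le _ _
      _ ≤ 1 * ∑ m ∈ s, |u m - v m| + |u a - v a| * 1 := by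
        gcongr
        exacts [hu.1, ih hu.2 hv.2, abs_prod_le_one hv.2]
      _ = |u a - v a| + ∑ m ∈ s, |u m - v m| := by ring

lemma abs_sub_div_sub_sub_div_le {i m k n : ℝ} (hm : 0 ≤ m) (hmk : m ≤ k) (hkn : k < n)
    (hmi : m ≤ i) (hin : i ≤ n) : |(i - m) / (n - m) - i / n| ≤ k / (n - k) := by
  have hn : 0 < n := by linarith
  have hnm : 0 < n - m := by linarith
  rw [show (i - m) / (n - m) - i / n = -(m / (n - m) * ((n - i) / n)) by field_simp; ring,
    abs_neg, abs_of_nonneg (mul_nonneg (div_nonneg hm hnm.le) (div_nonneg (by linarith) hn.le))]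
  calc m / (n - m) * ((n - i) / n) ≤ m / (n - m) * 1 := by
        gcongr; exact div_le_one_of_le₀ (by linarith) hn.le
    _ ≤ k / (n - k) := by
      rw [mul_one]; exact div_le_div₀ (by linarith) hmk (by linarith) (by linarith)

/-- The coefficient of the Bernstein basis polynomial `b_{n,i}` in the expansion of `s ^ k`. -/
noncomputable def chooseRatio (n i k : ℕ) : ℝ := (i.choose k : ℝ) / n.choose k

lemma chooseRatio_nonneg (n i k : ℕ) : 0 ≤ chooseRatio n i k := by
  unfold chooseRatio; positivity

lemma chooseRatio_le_one {n i : ℕ} (k : ℕ) (h : i ≤ n) : chooseRatio n i k ≤ 1 :=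
  div_le_one_of_le₀ (by exact_mod_cast Nat.choose_le_choose k h) (by positivity)

lemma chooseRatio_of_lt {n i k : ℕ} (h : i < k) : chooseRatio n i k = 0 := by
  simp [chooseRatio, Nat.choose_eq_zero_of_lt h]

lemma chooseRatio_add_mul_choose {n k : ℕ} (hk : k ≤ n) (m : ℕ) :
    chooseRatio n (k + m) k * n.choose (k + m) = (n - k).choose m := by
  have hk : (n.choose k : ℝ) ≠ 0 := by exact_mod_cast (Nat.choose_pos hk).ne'
  have h := Nat.choose_mul (n := n) (k := k + m) (Nat.le_add_right k m)
  rw [Nat.add_sub_cancel_left] at h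
  rw [chooseRatio, div_mul_eq_mul_div, div_eq_iff hk]
  exact_mod_cast (mul_comm _ _).trans (h.trans (mul_comm _ _))

lemma chooseRatio_eq_prod {n i k : ℕ} (hki : k ≤ i) (hin : i ≤ n) :
    chooseRatio n i k = ∏ m ∈ range k, ((i : ℝ) - m) / (n - m) := by
  rw [prod_div_distrib, chooseRatio,
    ← mul_div_mul_left _ _ (Nat.cast_ne_zero (R := ℝ) |>.2 k.factorial_ne_zero),
    ← Nat.cast_mul, ← Nat.cast_mul, ← Nat.descFactorial_eq_factorial_mul_choose,
    ← Nat.descFactorial_eq_factorial_mul_choose, Nat.descFactorial_eq_prod_range,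
    Nat.descFactorial_eq_prod_range, Nat.cast_prod, Nat.cast_prod]
  congr 1 <;> exact prod_congr rfl fun m hm => Nat.cast_sub (by rw [mem_range] at hm; omega)

lemma pow_eq_sum_chooseRatio_mul_bernstein {n k : ℕ} (hk : k ≤ n) (s : ℝ) :
    s ^ k = ∑ i ∈ range (n + 1), chooseRatio n i k * (bernsteinPolynomial ℝ n i).eval s := by
  rw [range_eq_Ico, ← sum_Ico_consecutive _ (Nat.zero_le k) (by omega : k ≤ n + 1),
    sum_eq_zero fun i hi => by rw [chooseRatio_of_lt (mem_Ico.1 hi).2, zero_mul], zero_add,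
    sum_Ico_eq_sum_range, show n + 1 - k = n - k + 1 by omega]
  calc s ^ k = s ^ k * (s + (1 - s)) ^ (n - k) := by simp
    _ = _ := by
      rw [add_pow, mul_sum]
      refine sum_congr rfl fun m hm => ?_
      have hm : m ≤ n - k := Nat.lt_succ_iff.1 (mem_range.1 hm)
      simp only [bernsteinPolynomial, Polynomial.eval_mul, Polynomial.eval_pow,
        Polynomial.eval_sub, Polynomial.eval_one, Polynomial.eval_X, Polynomial.eval_natCast]
      rw [← chooseRatio_add_mul_choose hk, show n - (k + m) = n - k - m by omega, pow_add]
      ring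

lemma abs_chooseRatio_sub_pow_le {n i k : ℕ} (hkn : k < n) (hin : i ≤ n) :
    |chooseRatio n i k - ((i : ℝ) / n) ^ k| ≤ (k : ℝ) ^ 2 / (n - k) := by
  have hn : (0 : ℝ) < n := by exact_mod_cast k.zero_le.trans_lt hkn
  have hkn' : (k : ℝ) < n := by exact_mod_cast hkn
  have hin' : (i : ℝ) ≤ n := by exact_mod_cast hin
  have hfrac : |(i : ℝ) / n| ≤ 1 := by
    rw [abs_of_nonneg (by positivity)]; exact div_le_one_of_le₀ hin' hn.le
  rcases lt_or_ge i k with hik | hki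
  · have hik' : (i : ℝ) ≤ k := by exact_mod_cast hik.le
    have hk1 : (1 : ℝ) ≤ k := by exact_mod_cast i.zero_le.trans_lt hik
    rw [chooseRatio_of_lt hik, zero_sub, abs_neg, abs_of_nonneg (by positivity)]
    calc ((i : ℝ) / n) ^ k ≤ (i : ℝ) / n :=
          pow_le_of_le_one (by positivity) (div_le_one_of_le₀ hin' hn.le) (by omega)
      _ ≤ k / (n - k) := div_le_div₀ (by positivity) hik' (by linarith) (by linarith)
      _ ≤ k ^ 2 / (n - k) := by gcongr; nlinarith
  · have hm : ∀ m ∈ range k, (m : ℝ) ≤ k ∧ (m : ℝ) ≤ i := fun m hm => by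
      have := mem_range.1 hm
      exact ⟨by exact_mod_cast this.le, by exact_mod_cast (by omega : m ≤ i)⟩
    have hfactor : ∀ m ∈ range k, |((i : ℝ) - m) / (n - m)| ≤ 1 := fun m h => by
      obtain ⟨hmk, hmi⟩ := hm m h
      rw [abs_of_nonneg (div_nonneg (by linarith) (by linarith))]
      exact div_le_one_of_le₀ (by linarith) (by linarith)
    calc |chooseRatio n i k - ((i : ℝ) / n) ^ k|
        = |∏ m ∈ range k, ((i : ℝ) - m) / (n - m) - ∏ _m ∈ range k, (i : ℝ) / n| := by
          rw [chooseRatio_eq_prod hki hin, prod_const, card_range]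
      _ ≤ ∑ m ∈ range k, |((i : ℝ) - m) / (n - m) - i / n| :=
          abs_prod_sub_prod_le _ hfactor fun _ _ => hfrac
      _ ≤ ∑ m ∈ range k, (k : ℝ) / (n - k) := sum_le_sum fun m h =>
          abs_sub_div_sub_sub_div_le (Nat.cast_nonneg m) (hm m h).1 hkn' (hm m h).2 hin'
      _ = k ^ 2 / (n - k) := by rw [sum_const, card_range, nsmul_eq_mul]; ring

lemma le_totalDegree_of_mem_support {R σ : Type*} [CommSemiring R] {q : MvPolynomial σ R}
    {d : σ →₀ ℕ} (hd : d ∈ q.support) (t : σ) : d t ≤ q.totalDegree :=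
  (monomial_le_degreeOf t hd).trans (degreeOf_le_totalDegree q t)

section Cube

variable {σ : Type*} [Fintype σ]

/-- The coefficients of `q` in the tensor product Bernstein basis of degree `n` in each
variable. -/
noncomputable def bernsteinCoeff (q : MvPolynomial σ ℝ) (n : ℕ) (i : σ → ℕ) : ℝ :=
  ∑ d ∈ q.support, coeff d q * ∏ t, chooseRatio n (i t) (d t)

lemma eval_eq_sum_bernsteinCoeff [DecidableEq σ] {q : MvPolynomial σ ℝ} {n : ℕ}
    (hn : q.totalDegree ≤ n) (s : σ → ℝ) :
    eval s q = ∑ i ∈ Fintype.piFinset fun _ => range (n + 1),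
      bernsteinCoeff q n i * ∏ t, (bernsteinPolynomial ℝ n (i t)).eval (s t) := by
  calc eval s q = ∑ d ∈ q.support, coeff d q * ∏ t, s t ^ d t := eval_eq' s q
    _ = ∑ d ∈ q.support, ∑ i ∈ Fintype.piFinset fun _ => range (n + 1), coeff d q *
          ∏ t, (chooseRatio n (i t) (d t) * (bernsteinPolynomial ℝ n (i t)).eval (s t)) := by
      refine sum_congr rfl fun d hd => ?_
      rw [← mul_sum, ← prod_univ_sum (fun _ => range (n + 1))
        (fun t j => chooseRatio n j (d t) * (bernsteinPolynomial ℝ n j).eval (s t))]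
      congr 1
      exact prod_congr rfl fun t _ =>
        pow_eq_sum_chooseRatio_mul_bernstein ((le_totalDegree_of_mem_support hd t).trans hn) _
    _ = _ := by
      rw [sum_comm]
      simp_rw [bernsteinCoeff, sum_mul, prod_mul_distrib, mul_assoc]

lemma abs_bernsteinCoeff_sub_eval_le (q : MvPolynomial σ ℝ) {n : ℕ} (hn : q.totalDegree < n)
    {i : σ → ℕ} (hi : ∀ t, i t ≤ n) :
    |bernsteinCoeff q n i - eval (fun t => (i t : ℝ) / n) q| ≤
      (∑ d ∈ q.support, |coeff d q|) *
        (Fintype.card σ * ((q.totalDegree : ℝ) ^ 2 / (n - q.totalDegree))) := by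
  set K := q.totalDegree
  have hKn : (K : ℝ) < n := by exact_mod_cast hn
  rw [bernsteinCoeff, eval_eq', ← sum_sub_distrib, sum_mul]
  refine (abs_sum_le_sum_abs _ _).trans (sum_le_sum fun d hd => ?_)
  rw [← mul_sub, abs_mul]
  gcongr
  have hdK := le_totalDegree_of_mem_support hd
  calc |∏ t, chooseRatio n (i t) (d t) - ∏ t, ((i t : ℝ) / n) ^ d t|
      ≤ ∑ t, |chooseRatio n (i t) (d t) - ((i t : ℝ) / n) ^ d t| := by
        refine abs_prod_sub_prod_le _ (fun t _ => ?_) (fun t _ => ?_)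
        · rw [abs_of_nonneg (chooseRatio_nonneg ..)]; exact chooseRatio_le_one _ (hi t)
        · rw [abs_pow]
          refine pow_le_one₀ (abs_nonneg _) ?_
          rw [abs_of_nonneg (by positivity)]
          exact div_le_one_of_le₀ (by exact_mod_cast hi t) (by positivity)
    _ ≤ ∑ _t : σ, (K : ℝ) ^ 2 / (n - K) := sum_le_sum fun t _ => by
        have hdt : (d t : ℝ) ≤ K := by exact_mod_cast hdK t
        refine (abs_chooseRatio_sub_pow_le ((hdK t).trans_lt hn) (hi t)).trans ?_
        exact div_le_div₀ (by positivity) (by gcongr) (by linarith) (by linarith)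
    _ = _ := by rw [sum_const, card_univ, nsmul_eq_mul]

theorem eventually_bernsteinCoeff_nonneg {q : MvPolynomial σ ℝ} {c : ℝ} (hc : 0 < c)
    (hq : ∀ s : σ → ℝ, (∀ t, s t ∈ Set.Icc 0 1) → c ≤ eval s q) :
    ∀ᶠ n in atTop, ∀ i : σ → ℕ, (∀ t, i t ≤ n) → 0 ≤ bernsteinCoeff q n i := by
  set K := q.totalDegree
  have herr : Tendsto (fun n : ℕ => (∑ d ∈ q.support, |coeff d q|) *
      (Fintype.card σ * ((K : ℝ) ^ 2 / (n - K)))) atTop (𝓝 0) := by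
    have hden : Tendsto (fun n : ℕ => (n : ℝ) - K) atTop atTop :=
      tendsto_atTop_add_const_right _ (-(K : ℝ)) tendsto_natCast_atTop_atTop
    simpa using ((tendsto_const_nhds.div_atTop hden).const_mul _).const_mul _
  filter_upwards [herr.eventually (gt_mem_nhds hc), eventually_gt_atTop K] with n hsmall hKn i hi
  have hgrid : ∀ t, (i t : ℝ) / n ∈ Set.Icc 0 1 := fun t =>
    ⟨by positivity, div_le_one_of_le₀ (by exact_mod_cast hi t) (by positivity)⟩
  linarith [hq _ hgrid, (abs_le.1 (abs_bernsteinCoeff_sub_eval_le q hKn hi)).1]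

end Cube

lemma bernsteinPolynomial_eval_one_add_div_two {n k : ℕ} (hk : k ≤ n) (u : ℝ) :
    (bernsteinPolynomial ℝ n k).eval ((1 + u) / 2) =
      2 ^ n * n.choose k * ((1 + u) / 4) ^ k * ((1 - u) / 4) ^ (n - k) := by
  simp only [bernsteinPolynomial, Polynomial.eval_mul, Polynomial.eval_pow, Polynomial.eval_sub,
    Polynomial.eval_one, Polynomial.eval_X, Polynomial.eval_natCast]
  rw [show (1 + u) / 2 = 2 * ((1 + u) / 4) by ring, show 1 - 2 * ((1 + u) / 4) = 2 * ((1 - u) / 4)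
    by ring, mul_pow, mul_pow, ← Nat.add_sub_cancel' hk, pow_add, Nat.add_sub_cancel_left]
  ring

lemma sum_piFinset_fin_two_eq_sum_fin_four (n : ℕ) {f : (Fin 2 → ℕ) → ℝ}
    {g : (Fin 4 → ℕ) → ℝ} (hg : ∀ α, g α ≠ 0 → α 0 + α 1 = n ∧ α 2 + α 3 = n)
    (hfg : ∀ i : Fin 2 → ℕ, (∀ t, i t ≤ n) → f i = g ![i 0, n - i 0, i 1, n - i 1]) :
    ∑ i ∈ Fintype.piFinset (fun _ : Fin 2 => range (n + 1)), f i =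
      ∑ α ∈ (Fintype.piFinset fun _ : Fin 4 => range (2 * n + 1)).filter
        (fun α => ∑ t, α t ≤ 2 * n), g α := by
  refine sum_of_injOn (fun i => ![i 0, n - i 0, i 1, n - i 1]) (fun i _ j _ hij => ?_)
    (fun i hi => ?_) (fun α hα hne => ?_) (fun i hi => hfg i ?_)
  · ext t; fin_cases t
    exacts [congrFun hij 0, congrFun hij 2]
  · have hi' := fun t => mem_range.1 (Fintype.mem_piFinset.1 (mem_coe.1 hi) t)
    have h0 := hi' 0
    have h1 := hi' 1
    have hsum : ∑ t, ![i 0, n - i 0, i 1, n - i 1] t ≤ 2 * n := by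
      rw [Fin.sum_univ_four]
      show i 0 + (n - i 0) + i 1 + (n - i 1) ≤ 2 * n
      omega
    refine mem_filter.2 ⟨Fintype.mem_piFinset.2 fun t => mem_range.2 (Nat.lt_succ_of_le ?_), hsum⟩
    exact (single_le_sum (fun _ _ => Nat.zero_le _) (mem_univ t)).trans hsum
  · by_contra hα0
    obtain ⟨h01, h23⟩ := hg α hα0
    refine hne ⟨![α 0, α 2], Fintype.mem_piFinset.2 (Fin.forall_fin_two.2
      ⟨mem_range.2 (by omega : α 0 < n + 1), mem_range.2 (by omega : α 2 < n + 1)⟩), ?_⟩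
    ext t; fin_cases t
    exacts [rfl, show n - α 0 = α 1 by omega, rfl, show n - α 2 = α 3 by omega]
  · simpa [Nat.lt_succ_iff] using hi

theorem stmt16 (p : MvPolynomial (Fin 2) ℝ) (pstar : ℝ)
    (hpleast : IsLeast {r : ℝ | ∃ x : Fin 2 → ℝ, (∀ i, |x i| ≤ 1) ∧ eval x p = r} pstar)
    (hppos : 0 < pstar) :
    ∃ (M : ℕ) (b : (Fin 4 → ℕ) → ℝ), (∀ α, 0 ≤ b α) ∧
      ∀ x : Fin 2 → ℝ,
        eval x p =
          ∑ α ∈ (Fintype.piFinset fun _ : Fin 4 => Finset.range (M + 1)).filter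
              (fun α => ∑ i, α i ≤ M),
            b α * ((1 + x 0) / 4) ^ α 0 * ((1 - x 0) / 4) ^ α 1 *
              ((1 + x 1) / 4) ^ α 2 * ((1 - x 1) / 4) ^ α 3 := by
  have hq (s : Fin 2 → ℝ) :
      eval s (bind₁ (fun t => C 2 * X t - 1) p) = eval (fun t => 2 * s t - 1) p := by
    rw [show eval s = eval₂Hom (RingHom.id ℝ) s from rfl, eval₂Hom_bind₁]
    simp
  set q := bind₁ (fun t => C 2 * X t - 1) p
  have hpos (s : Fin 2 → ℝ) (hs : ∀ t, s t ∈ Set.Icc 0 1) : pstar ≤ eval s q :=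
    hq s ▸ hpleast.2 ⟨_, fun t => abs_le.2 ⟨by linarith [(hs t).1], by linarith [(hs t).2]⟩, rfl⟩
  obtain ⟨n, hcoeff, hdeg⟩ := ((eventually_bernsteinCoeff_nonneg hppos hpos).and
    (eventually_ge_atTop q.totalDegree)).exists
  refine ⟨2 * n, fun α => if α 0 + α 1 = n ∧ α 2 + α 3 = n then
    4 ^ n * n.choose (α 0) * n.choose (α 2) * bernsteinCoeff q n ![α 0, α 2] else 0,
    fun α => ?_, fun x => ?_⟩
  · beta_reduce
    split_ifs with h
    · exact mul_nonneg (by positivity)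
        (hcoeff _ (Fin.forall_fin_two.2 ⟨(by omega : α 0 ≤ n), (by omega : α 2 ≤ n)⟩))
    · rfl
  · rw [show eval x p = eval (fun t => (1 + x t) / 2) q by simp only [hq]; ring_nf,
      eval_eq_sum_bernsteinCoeff hdeg]
    refine sum_piFinset_fin_two_eq_sum_fin_four n (fun α hα => ?_) (fun i hi => ?_)
    · by_contra h; exact hα (by simp [h])
    · simp only [Fin.prod_univ_two, bernsteinPolynomial_eval_one_add_div_two (hi _)]
      simp only [Fin.isValue, Matrix.cons_val_zero, Matrix.cons_val_one, Matrix.cons_val, hi,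
        add_tsub_cancel_of_le, and_self, ↓reduceIte,
        show ![i 0, i 1] = i from FinVec.etaExpand_eq i]
      rw [show (4 : ℝ) ^ n = 2 ^ n * 2 ^ n by rw [← mul_pow]; norm_num]
      ring
end

section
/- Let g_0(x) = 1 − x₁² − x₂² and g_i(x) = (x₁ − a_i)² + (x₂ − b_i)² − R_i² for i = 1,…,m−1 with (a_i,b_i) ∈ ℝ², R_i > 0, and let S = {x ∈ ℝ² : g_k(x) ≥ 0 for all k}. Suppose i ≠ j are indices whose circles have distinct centers, and suppose that each of the circles S_i = {x : g_i(x) = 0} and S_j = {x : g_j(x) = 0} contains a nonempty open arc lying in the boundary of S. Then the polynomial g_i·g_j admits no representation of the form g_i g_j = Σ_{l=0}^N r_l² + Σ_{k=0}^{m−1} (Σ_{l=0}^N r_{kl}²)·g_k with N ∈ ℕ and r_l, r_{kl} ∈ ℝ[x₁,x₂]. -/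
/-!
Let `P`, `Q` be the circle polynomials of `g i`, `g j`. On an arc of `P = 0` inside `∂S` every `g k`
is nonnegative and `g i * g j` vanishes, so each `r l` and each `(∑ l, rr k l ^ 2) * g k` vanishes
there. A polynomial vanishing on an arc vanishes on the whole complexified circle
`z ↦ (a + ρ cos z, b + ρ sin z)`, `z ∈ ℂ` (identity theorem), hence is divisible by `P`; in
particular `P` is prime. So `P ∣ r l`, and `P ∣ rr k l` unless `P ∣ g k`, in which case `Q ∣ rr k l`
because no `g k` vanishes on two circles with distinct centres. This gives `c P Q ∈ (P², P Q²)`,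
i.e. `c Q = A P + τ Q²`, so `P ∣ c - τ Q` and `τ Q = c` on the complex circle of `P`. But `Q` has a
zero on it: two circles with distinct centres always meet over `ℂ`.
-/

open MvPolynomial

/-- `g₀(x) = 1 - x₁² - x₂²`. -/
noncomputable def gDisk : MvPolynomial (Fin 2) ℝ :=
  1 - X 0 ^ 2 - X 1 ^ 2

/-- `g(x) = (x₁ - a)² + (x₂ - b)² - R²`. -/
noncomputable def gHole (a b R : ℝ) : MvPolynomial (Fin 2) ℝ :=
  (X 0 - C a) ^ 2 + (X 1 - C b) ^ 2 - C R ^ 2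

open Topology

open Complex in
noncomputable def complexCirclePoint (a b ρ : ℝ) (z : ℂ) : Fin 2 → ℂ :=
  ![a + ρ * cos z, b + ρ * sin z]

noncomputable def circlePoint (a b ρ θ : ℝ) : Fin 2 → ℝ :=
  ![a + ρ * Real.cos θ, b + ρ * Real.sin θ]

lemma MvPolynomial.eq_zero_of_eval_eq_zero_on_Ioo {c : MvPolynomial (Fin 1) ℝ} {t₁ t₂ : ℝ}
    (hlt : t₁ < t₂) (h : ∀ y ∈ Set.Ioo t₁ t₂, eval (fun _ => y) c = 0) : c = 0 := by
  have hana : AnalyticOnNhd ℝ (fun y : ℝ => aeval (fun _ : Fin 1 => y) c) Set.univ :=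
    fun y _ => AnalyticAt.aeval_mvPolynomial (fun _ => analyticAt_id) c
  obtain ⟨y₀, hy₁, hy₂⟩ := exists_between hlt
  have hfreq : ∃ᶠ y in 𝓝[≠] y₀, aeval (fun _ : Fin 1 => y) c = 0 :=
    (eventually_nhdsWithin_of_eventually_nhds
      (Filter.eventually_of_mem (Ioo_mem_nhds hy₁ hy₂) h)).frequently
  have hzero := hana.eqOn_zero_of_preconnected_of_frequently_eq_zero isPreconnected_univ
    (Set.mem_univ _) hfreq
  refine MvPolynomial.funext fun x => ?_
  have hx : x = fun _ => x 0 := _root_.funext fun i => congrArg x (Subsingleton.elim i 0)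
  rw [hx, map_zero]
  exact hzero (Set.mem_univ (x 0))

lemma MvPolynomial.eval_eq_eval_map_modByMonic_finSuccEquiv {R : Type*} [CommRing R] {n : ℕ}
    (P : MvPolynomial (Fin (n + 1)) R) {Q : MvPolynomial (Fin (n + 1)) R}
    {v : Fin (n + 1) → R} (hv : eval v Q = 0) :
    eval v P = ((finSuccEquiv R n P %ₘ finSuccEquiv R n Q).map (eval (Fin.tail v))).eval (v 0) := by
  have key (F : MvPolynomial (Fin (n + 1)) R) :
      eval v F = ((finSuccEquiv R n F).map (eval (Fin.tail v))).eval (v 0) := by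
    rw [← eval_eq_eval_mv_eval', Fin.cons_self_tail]
  rw [key Q] at hv
  rw [key P]
  conv_lhs => rw [← Polynomial.modByMonic_add_div (finSuccEquiv R n P) (finSuccEquiv R n Q)]
  simp [hv]

lemma eq_zero_of_sum_sq_add_sum_mul_eq_zero {R ι κ : Type*} [CommRing R] [LinearOrder R]
    [IsStrictOrderedRing R] [Fintype ι] [Fintype κ] {r : ι → R} {σ g : κ → R}
    (hσ : ∀ k, 0 ≤ σ k) (hg : ∀ k, 0 ≤ g k) (h : ∑ l, r l ^ 2 + ∑ k, σ k * g k = 0) :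
    (∀ l, r l = 0) ∧ ∀ k, σ k * g k = 0 := by
  have hnn : ∀ k ∈ Finset.univ, 0 ≤ σ k * g k := fun k _ => mul_nonneg (hσ k) (hg k)
  obtain ⟨hr, hσg⟩ := (add_eq_zero_iff_of_nonneg
    (Finset.sum_nonneg fun l _ => sq_nonneg (r l)) (Finset.sum_nonneg hnn)).1 h
  simp only [sq, Finset.sum_mul_self_eq_zero_iff, Finset.mem_univ, true_implies] at hr
  exact ⟨hr, fun k => (Finset.sum_eq_zero_iff_of_nonneg hnn).1 hσg k (Finset.mem_univ k)⟩

lemma sum_sq_add_sum_mul_mem_span_sq {R ι κ ι' : Type*} [CommRing R] [Fintype ι] [Fintype κ]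
    [Fintype ι'] {P Q : R} {r : ι → R} {g : κ → R} {s : κ → ι' → R} (hr : ∀ l, P ∣ r l)
    (hsP : ∀ k, ¬ P ∣ g k → ∀ l, P ∣ s k l) (hsQ : ∀ k, P ∣ g k → ∀ l, Q ∣ s k l) :
    ∑ l, r l ^ 2 + ∑ k, (∑ l, s k l ^ 2) * g k ∈ Ideal.span {P ^ 2, P * Q ^ 2} := by
  have hleft {x} (h : P ^ 2 ∣ x) : x ∈ Ideal.span {P ^ 2, P * Q ^ 2} := by
    obtain ⟨u, rfl⟩ := h
    exact Ideal.mem_span_pair.2 ⟨u, 0, by ring⟩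
  have hright {x} (h : P * Q ^ 2 ∣ x) : x ∈ Ideal.span {P ^ 2, P * Q ^ 2} := by
    obtain ⟨u, rfl⟩ := h
    exact Ideal.mem_span_pair.2 ⟨0, u, by ring⟩
  refine Ideal.add_mem _ (Ideal.sum_mem _ fun l _ => hleft (pow_dvd_pow_of_dvd (hr l) 2))
    (Ideal.sum_mem _ fun k _ => ?_)
  by_cases hPk : P ∣ g k
  · exact hright (mul_comm P _ ▸ mul_dvd_mul
      (Finset.dvd_sum fun l _ => pow_dvd_pow_of_dvd (hsQ k hPk l) 2) hPk)
  · exact hleft (dvd_mul_of_dvd_left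
      (Finset.dvd_sum fun l _ => pow_dvd_pow_of_dvd (hsP k hPk l) 2) _)

lemma surjective_mul_cos_add_mul_sin {α β : ℝ} (h : α ≠ 0 ∨ β ≠ 0) :
    Function.Surjective fun z : ℂ => α * Complex.cos z + β * Complex.sin z := by
  set w : ℂ := ⟨α, β⟩
  have hw : (‖w‖ : ℂ) ≠ 0 := by
    refine Complex.ofReal_ne_zero.2 (norm_ne_zero_iff.2 fun h0 => ?_)
    rw [Complex.ext_iff] at h0
    exact h.elim (· h0.1) (· h0.2)
  have hα : (α : ℂ) = ‖w‖ * Complex.cos w.arg := by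
    rw [← Complex.ofReal_cos, ← Complex.ofReal_mul, Complex.norm_mul_cos_arg]
  have hβ : (β : ℂ) = ‖w‖ * Complex.sin w.arg := by
    rw [← Complex.ofReal_sin, ← Complex.ofReal_mul, Complex.norm_mul_sin_arg]
  intro y
  obtain ⟨u, hu⟩ := Complex.cos_surjective (y / ‖w‖)
  refine ⟨u + w.arg, ?_⟩
  have hcos := Complex.cos_sub (u + w.arg) w.arg
  rw [add_sub_cancel_right, hu] at hcos
  rw [div_eq_iff hw] at hcos
  simp only [hα, hβ]
  linear_combination -hcos

section Circle

variable {a b ρ : ℝ}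

lemma eval_gHole (v : Fin 2 → ℝ) (u₁ u₂ w : ℝ) :
    eval v (gHole u₁ u₂ w) = (v 0 - u₁) ^ 2 + (v 1 - u₂) ^ 2 - w ^ 2 := by
  simp [gHole]

lemma aeval_complexCirclePoint_gHole (z : ℂ) (u₁ u₂ w : ℝ) :
    aeval (complexCirclePoint a b ρ z) (gHole u₁ u₂ w) =
      (a - u₁ + ρ * Complex.cos z) ^ 2 + (b - u₂ + ρ * Complex.sin z) ^ 2 - w ^ 2 := by
  simp only [complexCirclePoint, gHole, map_sub, map_add, map_pow, aeval_X, algHom_C,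
    Complex.coe_algebraMap, Matrix.cons_val_zero, Matrix.cons_val_one, Matrix.cons_val_fin_one]
  ring

lemma aeval_complexCirclePoint_gHole_self (z : ℂ) :
    aeval (complexCirclePoint a b ρ z) (gHole a b ρ) = 0 := by
  rw [aeval_complexCirclePoint_gHole]
  linear_combination (ρ : ℂ) ^ 2 * Complex.sin_sq_add_cos_sq z

lemma aeval_complexCirclePoint_ofReal (θ : ℝ) (P : MvPolynomial (Fin 2) ℝ) :
    aeval (complexCirclePoint a b ρ θ) P = eval (circlePoint a b ρ θ) P := by
  have : complexCirclePoint a b ρ θ = algebraMap ℝ ℂ ∘ circlePoint a b ρ θ := by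
    ext i; fin_cases i <;> simp [complexCirclePoint, circlePoint]
  rw [this, MvPolynomial.aeval_algebraMap_apply]
  rfl

lemma eval_circlePoint_gHole_self (θ : ℝ) : eval (circlePoint a b ρ θ) (gHole a b ρ) = 0 := by
  exact_mod_cast (aeval_complexCirclePoint_ofReal θ _).symm.trans
    (aeval_complexCirclePoint_gHole_self _)

lemma exists_circlePoint_eq (hρ : 0 ≤ ρ) {v : Fin 2 → ℝ} (hv : eval v (gHole a b ρ) = 0) :
    ∃ θ, circlePoint a b ρ θ = v := by
  set w : ℂ := ⟨v 0 - a, v 1 - b⟩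
  have hw : ‖w‖ = ρ := by
    rw [eval_gHole] at hv
    rw [← sq_eq_sq₀ (norm_nonneg _) hρ, Complex.sq_norm, Complex.normSq_apply]
    linear_combination hv
  refine ⟨w.arg, ?_⟩
  ext i; fin_cases i
  · simp [circlePoint, ← hw, Complex.norm_mul_cos_arg, w]
  · simp [circlePoint, ← hw, Complex.norm_mul_sin_arg, w]

lemma finSuccEquiv_gHole :
    finSuccEquiv ℝ 1 (gHole a b ρ) = Polynomial.X ^ 2 - 2 * Polynomial.C (C a) * Polynomial.X
      + Polynomial.C (C a ^ 2 + (X 0 - C b) ^ 2 - C ρ ^ 2) := by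
  have h1 : finSuccEquiv ℝ 1 (X 1) = Polynomial.C (X 0) := finSuccEquiv_X_succ (j := 0)
  have hC (r : ℝ) : finSuccEquiv ℝ 1 (C r) = Polynomial.C (C r) := by
    simp [finSuccEquiv_apply]
  simp only [gHole, map_sub, map_add, map_pow, finSuccEquiv_X_zero, h1, hC]
  ring

lemma gHole_dvd_of_eval_eq_zero (hρ : 0 < ρ) {P : MvPolynomial (Fin 2) ℝ}
    (h : ∀ v, eval v (gHole a b ρ) = 0 → eval v P = 0) : gHole a b ρ ∣ P := by
  have hmonic : (finSuccEquiv ℝ 1 (gHole a b ρ)).Monic := by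
    rw [finSuccEquiv_gHole]; monicity!
  have hdeg : (finSuccEquiv ℝ 1 (gHole a b ρ)).natDegree = 2 := by
    rw [finSuccEquiv_gHole]; compute_degree!
  rw [← map_dvd_iff (finSuccEquiv ℝ 1), ← Polynomial.modByMonic_eq_zero_iff_dvd hmonic]
  obtain ⟨r₁, r₀, hrem⟩ : ∃ r₁ r₀, finSuccEquiv ℝ 1 P %ₘ finSuccEquiv ℝ 1 (gHole a b ρ) =
      Polynomial.C r₁ * Polynomial.X + Polynomial.C r₀ := by
    refine ⟨_, _, Polynomial.eq_X_add_C_of_natDegree_le_one ?_⟩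
    have := Polynomial.natDegree_modByMonic_lt (finSuccEquiv ℝ 1 P) hmonic
      fun h1 => by simp [h1] at hdeg
    omega
  have hline (x y : ℝ) (hxy : (x - a) ^ 2 + (y - b) ^ 2 = ρ ^ 2) :
      eval (fun _ => y) r₁ * x + eval (fun _ => y) r₀ = 0 := by
    have hv : eval ![x, y] (gHole a b ρ) = 0 := by simp [eval_gHole, hxy]
    have := eval_eq_eval_map_modByMonic_finSuccEquiv P hv
    rw [h _ hv, hrem] at this
    simpa [Fin.tail, Matrix.vec_single_eq_const] using this.symm
  -- each `y` strictly between `b - ρ` and `b + ρ` is the ordinate of two circle points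
  have hcoeff (y : ℝ) (hy : y ∈ Set.Ioo (b - ρ) (b + ρ)) :
      eval (fun _ => y) r₁ = 0 ∧ eval (fun _ => y) r₀ = 0 := by
    have hpos : 0 < ρ ^ 2 - (y - b) ^ 2 := by nlinarith [hy.1, hy.2]
    set s := √(ρ ^ 2 - (y - b) ^ 2)
    have hs : s ^ 2 = ρ ^ 2 - (y - b) ^ 2 := Real.sq_sqrt hpos.le
    have hright := hline (a + s) y (by linear_combination hs)
    have hleft := hline (a - s) y (by linear_combination hs)
    have h₁ : eval (fun _ => y) r₁ = 0 := by
      have : eval (fun _ => y) r₁ * (2 * s) = 0 := by linear_combination hright - hleft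
      exact (mul_eq_zero.1 this).resolve_right (by positivity)
    exact ⟨h₁, by simpa [h₁] using hright⟩
  have hlt : b - ρ < b + ρ := by linarith
  rw [hrem, eq_zero_of_eval_eq_zero_on_Ioo hlt fun y hy => (hcoeff y hy).1,
    eq_zero_of_eval_eq_zero_on_Ioo hlt fun y hy => (hcoeff y hy).2]
  simp

lemma analyticOnNhd_aeval_complexCirclePoint (P : MvPolynomial (Fin 2) ℝ) :
    AnalyticOnNhd ℂ (fun z => aeval (complexCirclePoint a b ρ z) P) Set.univ := by
  refine fun z _ => .aeval_mvPolynomial (Fin.forall_fin_two.2 ⟨?_, ?_⟩) P <;>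
    simp only [complexCirclePoint, Matrix.cons_val_zero, Matrix.cons_val_one] <;> fun_prop

lemma aeval_complexCirclePoint_eq_zero_of_Ioo {P : MvPolynomial (Fin 2) ℝ} {t₁ t₂ : ℝ}
    (hlt : t₁ < t₂) (h : ∀ θ ∈ Set.Ioo t₁ t₂, eval (circlePoint a b ρ θ) P = 0) (z : ℂ) :
    aeval (complexCirclePoint a b ρ z) P = 0 := by
  obtain ⟨θ₀, hθ₁, hθ₂⟩ := exists_between hlt
  have hreal : ∃ᶠ θ : ℝ in 𝓝[≠] θ₀, aeval (complexCirclePoint a b ρ θ) P = 0 := by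
    refine (eventually_nhdsWithin_of_eventually_nhds (Filter.eventually_of_mem
      (Ioo_mem_nhds hθ₁ hθ₂) fun θ hθ => ?_)).frequently
    rw [aeval_complexCirclePoint_ofReal, h θ hθ, Complex.ofReal_zero]
  have hofReal : Filter.Tendsto ((↑) : ℝ → ℂ) (𝓝[≠] θ₀) (𝓝[≠] (θ₀ : ℂ)) :=
    Complex.continuous_ofReal.continuousWithinAt.tendsto_nhdsWithin fun θ hθ => by simpa using hθ
  exact (analyticOnNhd_aeval_complexCirclePoint P).eqOn_zero_of_preconnected_of_frequently_eq_zero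
    isPreconnected_univ (Set.mem_univ _) (hofReal.frequently hreal) (Set.mem_univ z)

lemma eval_circlePoint_eq_zero_of_gHole_dvd {P : MvPolynomial (Fin 2) ℝ} (h : gHole a b ρ ∣ P)
    (θ : ℝ) : eval (circlePoint a b ρ θ) P = 0 := by
  obtain ⟨q, rfl⟩ := h
  simp [eval_circlePoint_gHole_self]

lemma gHole_dvd_of_forall_eval_circlePoint (hρ : 0 < ρ) {P : MvPolynomial (Fin 2) ℝ}
    (h : ∀ θ, eval (circlePoint a b ρ θ) P = 0) : gHole a b ρ ∣ P :=
  gHole_dvd_of_eval_eq_zero hρ fun _ hv => by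
    obtain ⟨θ, rfl⟩ := exists_circlePoint_eq hρ.le hv
    exact h θ

lemma gHole_dvd_iff_forall_aeval (hρ : 0 < ρ) {P : MvPolynomial (Fin 2) ℝ} :
    gHole a b ρ ∣ P ↔ ∀ z : ℂ, aeval (complexCirclePoint a b ρ z) P = 0 := by
  refine ⟨fun ⟨q, hq⟩ z => by simp [hq, aeval_complexCirclePoint_gHole_self], fun h => ?_⟩
  refine gHole_dvd_of_forall_eval_circlePoint hρ fun θ => ?_
  exact_mod_cast (aeval_complexCirclePoint_ofReal θ P).symm.trans (h θ)

lemma gHole_dvd_of_eval_eq_zero_on_Ioo (hρ : 0 < ρ) {P : MvPolynomial (Fin 2) ℝ} {t₁ t₂ : ℝ}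
    (hlt : t₁ < t₂) (h : ∀ θ ∈ Set.Ioo t₁ t₂, eval (circlePoint a b ρ θ) P = 0) :
    gHole a b ρ ∣ P :=
  (gHole_dvd_iff_forall_aeval hρ).2 (aeval_complexCirclePoint_eq_zero_of_Ioo hlt h)

theorem prime_gHole (hρ : 0 < ρ) : Prime (gHole a b ρ) := by
  refine ⟨fun h0 => ?_, fun hu => ?_, fun P Q hPQ => ?_⟩
  · have := congrArg (eval ![a, b]) h0
    exact hρ.ne' (by simpa [eval_gHole] using this)
  · have := hu.map (eval (circlePoint a b ρ 0))
    rw [eval_circlePoint_gHole_self] at this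
    exact not_isUnit_zero this
  · simp only [gHole_dvd_iff_forall_aeval hρ, map_mul] at hPQ ⊢
    exact ((analyticOnNhd_aeval_complexCirclePoint P).eq_zero_or_eq_zero_of_mul_eq_zero
      (analyticOnNhd_aeval_complexCirclePoint Q) (fun z _ => hPQ z) isPreconnected_univ).imp
      (fun h z => h z trivial) (fun h z => h z trivial)

lemma eq_of_gHole_dvd_C_mul_gHole {p q : ℝ × ℝ} {d w : ℝ} (hρ : 0 < ρ) (hd : d ≠ 0)
    (h : gHole p.1 p.2 ρ ∣ C d * gHole q.1 q.2 w) : q = p := by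
  rw [(hd.isUnit.map (C : ℝ →+* MvPolynomial (Fin 2) ℝ)).dvd_mul_left] at h
  have h₀ := eval_circlePoint_eq_zero_of_gHole_dvd h 0
  have h₁ := eval_circlePoint_eq_zero_of_gHole_dvd h Real.pi
  have h₂ := eval_circlePoint_eq_zero_of_gHole_dvd h (Real.pi / 2)
  have h₃ := eval_circlePoint_eq_zero_of_gHole_dvd h (-(Real.pi / 2))
  simp only [eval_gHole, circlePoint, Matrix.cons_val_zero, Matrix.cons_val_one, Real.cos_zero,
    Real.sin_zero, Real.cos_pi, Real.sin_pi, Real.cos_pi_div_two, Real.sin_pi_div_two,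
    Real.cos_neg, Real.sin_neg] at h₀ h₁ h₂ h₃
  have h₁' : ρ * (p.1 - q.1) = 0 := by linear_combination (h₀ - h₁) / 4
  have h₂' : ρ * (p.2 - q.2) = 0 := by linear_combination (h₂ - h₃) / 4
  simp only [mul_eq_zero, hρ.ne', false_or, sub_eq_zero] at h₁' h₂'
  exact Prod.ext h₁'.symm h₂'.symm

theorem gHole_dvd_of_sos_eval_eq_zero_on_arc {ι κ ι' : Type*} [Fintype ι] [Fintype κ]
    [Fintype ι'] {t₁ t₂ : ℝ} (hρ : 0 < ρ) (hlt : t₁ < t₂)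
    {g : κ → MvPolynomial (Fin 2) ℝ} {r : ι → MvPolynomial (Fin 2) ℝ}
    {s : κ → ι' → MvPolynomial (Fin 2) ℝ}
    (hg : ∀ θ ∈ Set.Ioo t₁ t₂, ∀ k, 0 ≤ eval (circlePoint a b ρ θ) (g k))
    (hf : ∀ θ ∈ Set.Ioo t₁ t₂,
      eval (circlePoint a b ρ θ) (∑ l, r l ^ 2 + ∑ k, (∑ l, s k l ^ 2) * g k) = 0) :
    (∀ l, gHole a b ρ ∣ r l) ∧ ∀ k, ¬ gHole a b ρ ∣ g k → ∀ l, gHole a b ρ ∣ s k l := by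
  have hzero (θ : ℝ) (hθ : θ ∈ Set.Ioo t₁ t₂) := by
    have := hf θ hθ
    simp only [map_add, map_sum, map_mul, map_pow] at this
    exact eq_zero_of_sum_sq_add_sum_mul_eq_zero (fun k => Finset.sum_nonneg fun l _ => sq_nonneg _)
      (hg θ hθ) this
  refine ⟨fun l => gHole_dvd_of_eval_eq_zero_on_Ioo hρ hlt fun θ hθ => (hzero θ hθ).1 l,
    fun k hk l => ?_⟩
  have hσg : gHole a b ρ ∣ (∑ l, s k l ^ 2) * g k :=
    gHole_dvd_of_eval_eq_zero_on_Ioo hρ hlt fun θ hθ => by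
      simpa only [map_mul, map_sum, map_pow] using (hzero θ hθ).2 k
  have hσ := ((prime_gHole hρ).dvd_or_dvd hσg).resolve_right hk
  refine gHole_dvd_of_forall_eval_circlePoint hρ fun θ => ?_
  have := eval_circlePoint_eq_zero_of_gHole_dvd hσ θ
  simp only [map_sum, map_pow] at this
  simp only [sq, Finset.sum_mul_self_eq_zero_iff] at this
  exact this l (Finset.mem_univ l)

lemma exists_aeval_complexCirclePoint_gHole_eq_zero {a' b' ρ' : ℝ} (hρ : 0 < ρ)
    (hab : (a', b') ≠ (a, b)) : ∃ z, aeval (complexCirclePoint a b ρ z) (gHole a' b' ρ') = 0 := by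
  have hαβ : a - a' ≠ 0 ∨ b - b' ≠ 0 := by
    by_contra! h
    exact hab (Prod.ext (by linarith [h.1]) (by linarith [h.2]))
  obtain ⟨z, hz⟩ := surjective_mul_cos_add_mul_sin hαβ
    (-((a - a') ^ 2 + (b - b') ^ 2 + ρ ^ 2 - ρ' ^ 2) / (2 * ρ))
  refine ⟨z, ?_⟩
  have hρ' : (2 * ρ : ℂ) ≠ 0 := by exact_mod_cast (by positivity : 2 * ρ ≠ 0)
  simp only [eq_div_iff hρ'] at hz
  rw [aeval_complexCirclePoint_gHole]
  push_cast at hz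
  linear_combination (ρ : ℂ) ^ 2 * Complex.sin_sq_add_cos_sq z + hz

theorem C_mul_gHole_not_mem_span {a' b' ρ' c : ℝ} (hρ : 0 < ρ) (hab : (a', b') ≠ (a, b))
    (hc : c ≠ 0) : C c * gHole a' b' ρ' ∉ Ideal.span {gHole a b ρ, gHole a' b' ρ' ^ 2} := by
  rw [Ideal.mem_span_pair]
  rintro ⟨A, τ, h⟩
  have hdvd : gHole a b ρ ∣ gHole a' b' ρ' * (C c - τ * gHole a' b' ρ') :=
    ⟨A, by linear_combination -h⟩
  rcases (prime_gHole hρ).dvd_or_dvd hdvd with hQ | hT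
  · refine hab (eq_of_gHole_dvd_C_mul_gHole (p := (a, b)) (q := (a', b')) (w := ρ') hρ
      one_ne_zero ?_)
    simpa using hQ
  · obtain ⟨z, hz⟩ := exists_aeval_complexCirclePoint_gHole_eq_zero (ρ' := ρ') hρ hab
    have := (gHole_dvd_iff_forall_aeval hρ).1 hT z
    exact hc (by simpa [hz] using this)

lemma exists_Ioo_forall_eval_circlePoint_nonneg {κ : Type*} {g : κ → MvPolynomial (Fin 2) ℝ}
    {S : Set (EuclideanSpace ℝ (Fin 2))} (hS : S = {x | ∀ k, 0 ≤ eval (fun j => x j) (g k)})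
    {G : MvPolynomial (Fin 2) ℝ} {d : ℝ} (hρ : 0 < ρ) (hd : d ≠ 0) (hG : G = C d * gHole a b ρ)
    (harc : ∃ x ∈ {x : EuclideanSpace ℝ (Fin 2) | eval (fun j => x j) G = 0},
      ∃ ε > (0 : ℝ),
        Metric.ball x ε ∩ {x : EuclideanSpace ℝ (Fin 2) | eval (fun j => x j) G = 0} ⊆
          frontier S) :
    ∃ t₁ t₂, t₁ < t₂ ∧ ∀ θ ∈ Set.Ioo t₁ t₂, ∀ k, 0 ≤ eval (circlePoint a b ρ θ) (g k) := by
  have hSclosed : IsClosed S := by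
    rw [hS, Set.ofPred_forall]
    exact isClosed_iInter fun k => isClosed_le continuous_const
      ((continuous_eval (g k)).comp (PiLp.continuous_ofLp 2 _))
  obtain ⟨x, hx, ε, hε, hsub⟩ := harc
  have hx' : eval (fun j => x j) (gHole a b ρ) = 0 := by simpa [hG, hd] using hx
  obtain ⟨θ₀, hθ₀⟩ := exists_circlePoint_eq hρ.le hx'
  have hcont : Continuous fun θ => WithLp.toLp 2 (circlePoint a b ρ θ) :=
    (PiLp.continuous_toLp 2 _).comp (by unfold circlePoint; fun_prop)
  have hθ₀ε : θ₀ ∈ (fun θ => WithLp.toLp 2 (circlePoint a b ρ θ)) ⁻¹' Metric.ball x ε := by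
    rw [Set.mem_preimage, hθ₀]
    exact Metric.mem_ball_self hε
  obtain ⟨δ, hδ, hball⟩ := Metric.isOpen_iff.1 (Metric.isOpen_ball.preimage hcont) θ₀ hθ₀ε
  refine ⟨θ₀ - δ, θ₀ + δ, by linarith, fun θ hθ => ?_⟩
  have hmem : WithLp.toLp 2 (circlePoint a b ρ θ) ∈ S := by
    refine hSclosed.frontier_subset (hsub ⟨hball (by rwa [Real.ball_eq_Ioo]), ?_⟩)
    show eval (circlePoint a b ρ θ) G = 0
    rw [hG, map_mul, eval_circlePoint_gHole_self, mul_zero]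
  simpa [hS] using hmem

end Circle

theorem mul_ne_quadraticModule_repr_of_arcs {κ ι ι' : Type*} [Fintype κ] [Fintype ι] [Fintype ι']
    {g : κ → MvPolynomial (Fin 2) ℝ} {ctr : κ → ℝ × ℝ} {ρ d : κ → ℝ} (hρ : ∀ k, 0 < ρ k)
    (hd : ∀ k, d k ≠ 0) (hg : ∀ k, g k = C (d k) * gHole (ctr k).1 (ctr k).2 (ρ k))
    {i j : κ} (hij : ctr i ≠ ctr j)
    (hi : ∃ t₁ t₂, t₁ < t₂ ∧ ∀ θ ∈ Set.Ioo t₁ t₂,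
      ∀ k, 0 ≤ eval (circlePoint (ctr i).1 (ctr i).2 (ρ i) θ) (g k))
    (hj : ∃ t₁ t₂, t₁ < t₂ ∧ ∀ θ ∈ Set.Ioo t₁ t₂,
      ∀ k, 0 ≤ eval (circlePoint (ctr j).1 (ctr j).2 (ρ j) θ) (g k))
    (r : ι → MvPolynomial (Fin 2) ℝ) (s : κ → ι' → MvPolynomial (Fin 2) ℝ) :
    g i * g j ≠ ∑ l, r l ^ 2 + ∑ k, (∑ l, s k l ^ 2) * g k := by
  intro hrep
  set P := gHole (ctr i).1 (ctr i).2 (ρ i)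
  set Q := gHole (ctr j).1 (ctr j).2 (ρ j)
  have hvan (k : κ) (hk : k = i ∨ k = j) (θ : ℝ) :
      eval (circlePoint (ctr k).1 (ctr k).2 (ρ k) θ) (g i * g j) = 0 := by
    rcases hk with rfl | rfl <;> simp [hg, eval_circlePoint_gHole_self]
  obtain ⟨t₁, t₂, hlt, hnn⟩ := hi
  obtain ⟨hrP, hsP⟩ := gHole_dvd_of_sos_eval_eq_zero_on_arc (hρ i) hlt hnn
    fun θ _ => hrep ▸ hvan i (.inl rfl) θ
  obtain ⟨t₁', t₂', hlt', hnn'⟩ := hj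
  obtain ⟨-, hsQ⟩ := gHole_dvd_of_sos_eval_eq_zero_on_arc (hρ j) hlt' hnn'
    fun θ _ => hrep ▸ hvan j (.inr rfl) θ
  have hPQ (k : κ) (hPk : P ∣ g k) : ¬ Q ∣ g k := fun hQk => hij <|
    (eq_of_gHole_dvd_C_mul_gHole (hρ i) (hd k) (hg k ▸ hPk)).symm.trans
      (eq_of_gHole_dvd_C_mul_gHole (hρ j) (hd k) (hg k ▸ hQk))
  obtain ⟨A, τ, h⟩ := Ideal.mem_span_pair.1 <| hrep ▸
    sum_sq_add_sum_mul_mem_span_sq hrP hsP fun k hPk => hsQ k (hPQ k hPk)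
  have hQ : C (d i * d j) * Q ∈ Ideal.span {P, Q ^ 2} := by
    have hP : P ≠ 0 := (prime_gHole (hρ i)).ne_zero
    refine Ideal.mem_span_pair.2 ⟨A, τ, mul_left_cancel₀ hP ?_⟩
    rw [hg i, hg j] at h
    rw [C_mul]
    linear_combination h
  exact C_mul_gHole_not_mem_span (hρ i) (by simpa only [Prod.mk.eta] using hij.symm)
    (mul_ne_zero (hd i) (hd j)) hQ

theorem stmt17 (m : ℕ) (cen : Fin m → ℝ × ℝ) (R : Fin m → ℝ) (hR : ∀ i, 0 < R i)
    (g : Fin (m + 1) → MvPolynomial (Fin 2) ℝ)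
    (hg : g = Fin.cons gDisk fun i => gHole (cen i).1 (cen i).2 (R i))
    (ctr : Fin (m + 1) → ℝ × ℝ)
    (hctr : ctr = Fin.cons (0, 0) cen)
    (S : Set (EuclideanSpace ℝ (Fin 2)))
    (hS : S = {x | ∀ k, 0 ≤ eval (fun j => x j) (g k)})
    (i j : Fin (m + 1)) (hij : ctr i ≠ ctr j)
    (harci : ∃ x ∈ {x : EuclideanSpace ℝ (Fin 2) | eval (fun j' => x j') (g i) = 0},
      ∃ ε > (0 : ℝ),
        Metric.ball x ε ∩ {x : EuclideanSpace ℝ (Fin 2) | eval (fun j' => x j') (g i) = 0} ⊆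
          frontier S)
    (harcj : ∃ x ∈ {x : EuclideanSpace ℝ (Fin 2) | eval (fun j' => x j') (g j) = 0},
      ∃ ε > (0 : ℝ),
        Metric.ball x ε ∩ {x : EuclideanSpace ℝ (Fin 2) | eval (fun j' => x j') (g j) = 0} ⊆
          frontier S) :
    ¬ ∃ (N : ℕ) (r : Fin (N + 1) → MvPolynomial (Fin 2) ℝ)
        (rr : Fin (m + 1) → Fin (N + 1) → MvPolynomial (Fin 2) ℝ),
        g i * g j = ∑ l, r l ^ 2 + ∑ k, (∑ l, rr k l ^ 2) * g k := by
  rintro ⟨N, r, rr, hrep⟩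
  set ρ : Fin (m + 1) → ℝ := Fin.cons 1 R
  set d : Fin (m + 1) → ℝ := Fin.cons (-1) 1
  have hρ : ∀ k, 0 < ρ k := Fin.cases one_pos hR
  have hd : ∀ k, d k ≠ 0 := Fin.cases (by simp [d]) fun _ => by simp [d]
  have hgk : ∀ k, g k = C (d k) * gHole (ctr k).1 (ctr k).2 (ρ k) := by
    subst hg hctr
    refine Fin.cases ?_ fun k => ?_
    · simp only [gDisk, gHole, Fin.cons_zero, C_neg, C_1, C_0, d, ρ]
      ring
    · simp [d, ρ]
  exact mul_ne_quadraticModule_repr_of_arcs hρ hd hgk hij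
    (exists_Ioo_forall_eval_circlePoint_nonneg hS (hρ i) (hd i) (hgk i) harci)
    (exists_Ioo_forall_eval_circlePoint_nonneg hS (hρ j) (hd j) (hgk j) harcj) r rr hrep
end

section
/- Let (a₁,a₂), (b₁,b₂) ∈ ℝ² be distinct points and R₁, R₂ > 0. Then the complex algebraic sets {x ∈ ℂ² : (x₁ − a₁)² + (x₂ − a₂)² = R₁²} and {x ∈ ℂ² : (x₁ − b₁)² + (x₂ − b₂)² = R₂²} have nonempty intersection. -/
/-!
Subtracting the two circle equations leaves a linear equation, so the intersection is that of one
circle with a line, i.e. the roots of a quadratic. Concretely, with `d = c' - c` and `D = d₁² + d₂²`,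
the point `c + l d + t d^⊥` has squared distance `(l² + t²) D` to `c` and `((l - 1)² + t²) D` to `c'`;
as long as `D ≠ 0` one solves linearly for `l` and then takes a square root for `t` in an
algebraically closed field. Over `ℝ` the quantity `D` is nonzero exactly when the centers differ.
-/

theorem exists_eq_of_sq_add_sq_sub_ne_zero {K : Type*} [Field K] [IsAlgClosed K] [NeZero (2 : K)]
    (c c' : K × K) (hD : (c'.1 - c.1) ^ 2 + (c'.2 - c.2) ^ 2 ≠ 0) (r s : K) :
    ∃ x : K × K, (x.1 - c.1) ^ 2 + (x.2 - c.2) ^ 2 = r ∧ (x.1 - c'.1) ^ 2 + (x.2 - c'.2) ^ 2 = s := by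
  set d₁ := c'.1 - c.1
  set d₂ := c'.2 - c.2
  set D := d₁ ^ 2 + d₂ ^ 2
  set l := (r - s + D) / (2 * D)
  obtain ⟨t, ht⟩ := IsAlgClosed.exists_pow_nat_eq (r / D - l ^ 2) two_pos
  have hl : 2 * l * D = r - s + D := by
    simp only [l]
    field_simp
  have ht : (l ^ 2 + t ^ 2) * D = r := by
    rw [ht]
    field_simp
    ring
  refine ⟨(c.1 + l * d₁ - t * d₂, c.2 + l * d₂ + t * d₁), ?_, ?_⟩
  · linear_combination ht
  · linear_combination ht - hl

theorem sq_sub_add_sq_sub_ne_zero {R : Type*} [CommRing R] [LinearOrder R] [IsStrictOrderedRing R]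
    {a b : R × R} (hab : a ≠ b) : (b.1 - a.1) ^ 2 + (b.2 - a.2) ^ 2 ≠ 0 := by
  rw [sq, sq, Ne, mul_self_add_mul_self_eq_zero, sub_eq_zero, sub_eq_zero]
  exact fun h => hab (Prod.ext h.1.symm h.2.symm)

theorem stmt19_general (a b : ℝ × ℝ) (hab : a ≠ b) (R₁ R₂ : ℝ) :
    ∃ x : ℂ × ℂ,
      (x.1 - (a.1 : ℂ)) ^ 2 + (x.2 - (a.2 : ℂ)) ^ 2 = (R₁ : ℂ) ^ 2 ∧
      (x.1 - (b.1 : ℂ)) ^ 2 + (x.2 - (b.2 : ℂ)) ^ 2 = (R₂ : ℂ) ^ 2 := by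
  have hD : ((b.1 : ℂ) - a.1) ^ 2 + ((b.2 : ℂ) - a.2) ^ 2 ≠ 0 := by
    exact_mod_cast sq_sub_add_sq_sub_ne_zero hab
  exact exists_eq_of_sq_add_sq_sub_ne_zero ((a.1 : ℂ), (a.2 : ℂ)) ((b.1 : ℂ), (b.2 : ℂ)) hD _ _

theorem stmt19 (a b : ℝ × ℝ) (hab : a ≠ b) (R₁ R₂ : ℝ) (hR₁ : 0 < R₁) (hR₂ : 0 < R₂) :
    ∃ x : ℂ × ℂ,
      (x.1 - (a.1 : ℂ)) ^ 2 + (x.2 - (a.2 : ℂ)) ^ 2 = (R₁ : ℂ) ^ 2 ∧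
      (x.1 - (b.1 : ℂ)) ^ 2 + (x.2 - (b.2 : ℂ)) ^ 2 = (R₂ : ℂ) ^ 2 :=
  stmt19_general a b hab R₁ R₂
end
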